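/- arXiv:1512.08016 — 13 statements merged into one kernel-verified Lean document; each statement's English description precedes it below -/
import Mathlib

section
/- For every integer N ≥ 0, the identity Σ_{(n,m): n,m ≥ 0, n+m = N} 1 / [ ∏_{s=1}^{n} (1 − t^{−s})(1 − Q^{−1} t^{n−m−s}) · ∏_{s=1}^{m} (1 − t^{−s})(1 − Q t^{m−n−s}) ] = 1 / ∏_{s=1}^{N} (1 − t^{−s}) holds in the field ℚ(t, Q) of rational functions in two variables t and Q (equivalently, for all complex t, Q for which every factor appearing in a denominator is nonzero). -/
/-!
The summands `F n m = 1 / nekrasovDenom t Q n m` have a Wilf–Zeilberger partner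
`G n m = t^(-(n+m)) (1 - t^n) (Q - t^n) / (Q - t^(n-m)) · F n m`:
`F n (m+1) (1 - t^(-(n+m+1))) - F n m = G (n+1) m - G n (m+1)`.
Summed over `n + m = N` the right-hand side telescopes, and the boundary terms `G 0 _ = 0` and
`G (N+1) 0 = -(1 - t^(-(N+1))) F (N+1) 0` make the sums `S N` over the antidiagonals satisfy
`S (N+1) (1 - t^(-(N+1))) = S N`, the recursion of `1 / ∏_{s ≤ N} (1 - t^(-s))`.
The WZ relation itself becomes a rational identity in `t^n, t^m, t, Q` once `F n (m+1)` and
`F (n+1) m` are expressed through `F n m` by shifting the products.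
-/

open Finset

theorem prod_Icc_one_succ_sub {M : Type*} [CommMonoid M] (g : ℤ → M) (c : ℤ) (n : ℕ) :
    ∏ s ∈ Icc 1 (n + 1), g (c - s) = g (c - 1) * ∏ s ∈ Icc 1 n, g (c - 1 - s) := by
  induction n with
  | zero => simp
  | succ n ih =>
    rw [prod_Icc_succ_top (by omega), ih, prod_Icc_succ_top (by omega), mul_assoc]
    push_cast
    ring_nf

theorem sum_antidiagonal_succ_mul_eq_of_wz {R : Type*} [CommRing R] (F G : ℕ → ℕ → R)
    (c : ℕ → R) (hstep : ∀ n m, F n (m + 1) * c (n + m + 1) - F n m = G (n + 1) m - G n (m + 1))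
    (hleft : ∀ m, G 0 m = 0) (hright : ∀ n, G n 0 = -(F n 0 * c n)) (N : ℕ) :
    (∑ p ∈ antidiagonal (N + 1), F p.1 p.2) * c (N + 1) = ∑ p ∈ antidiagonal N, F p.1 p.2 := by
  have hterm : ∀ p ∈ antidiagonal N, F p.1 (p.2 + 1) * c (N + 1) =
      F p.1 p.2 + (G (p.1 + 1) p.2 - G p.1 (p.2 + 1)) := by
    intro p hp
    rw [← mem_antidiagonal.1 hp, ← hstep]
    ring
  have hsucc := Nat.sum_antidiagonal_succ (f := fun p => G p.1 p.2) (n := N)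
  have hsucc' := Nat.sum_antidiagonal_succ' (f := fun p => G p.1 p.2) (n := N)
  rw [sum_mul, Nat.sum_antidiagonal_succ', sum_congr rfl hterm, sum_add_distrib, sum_sub_distrib]
  linear_combination hsucc' - hsucc - hleft (N + 1) + hright (N + 1)

variable {K : Type*} [Field K]

theorem zpow_ne_one_of_pow_ne_one {t : K} (htru : ∀ s : ℕ, 0 < s → t ^ s ≠ 1) {e : ℤ}
    (he : e ≠ 0) : t ^ e ≠ 1 := by
  rcases e with (_ | k) | k
  · exact absurd rfl he
  · rw [Int.ofNat_eq_natCast, zpow_natCast]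
    exact htru (k + 1) k.succ_pos
  · rw [zpow_negSucc, inv_ne_one]
    exact htru (k + 1) k.succ_pos

theorem one_sub_zpow_ne_zero {t : K} (htru : ∀ s : ℕ, 0 < s → t ^ s ≠ 1) {e : ℤ}
    (he : e ≠ 0) : 1 - t ^ e ≠ 0 :=
  sub_ne_zero.2 (zpow_ne_one_of_pow_ne_one htru he).symm

theorem one_sub_inv_mul_zpow_ne_zero {t Q : K} (hQ : Q ≠ 0) (hQt : ∀ k : ℤ, Q ≠ t ^ k) (e : ℤ) :
    1 - Q⁻¹ * t ^ e ≠ 0 := by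
  rw [← div_eq_inv_mul, one_sub_div hQ, div_ne_zero_iff, sub_ne_zero, and_iff_left hQ]
  exact hQt e

theorem one_sub_mul_zpow_ne_zero {t Q : K} (ht : t ≠ 0) (hQt : ∀ k : ℤ, Q ≠ t ^ k) (e : ℤ) :
    1 - Q * t ^ e ≠ 0 := by
  rw [sub_ne_zero, ne_comm, ne_eq, mul_eq_one_iff_eq_inv₀ (zpow_ne_zero e ht), ← zpow_neg]
  exact hQt (-e)

def nekrasovDenom (t Q : K) (n m : ℕ) : K :=
  (∏ s ∈ Icc 1 n, ((1 - t ^ (-(s : ℤ))) * (1 - Q⁻¹ * t ^ ((n : ℤ) - m - s)))) *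
    ∏ s ∈ Icc 1 m, ((1 - t ^ (-(s : ℤ))) * (1 - Q * t ^ ((m : ℤ) - n - s)))

theorem nekrasovDenom_swap (t Q : K) (n m : ℕ) :
    nekrasovDenom t Q⁻¹ m n = nekrasovDenom t Q n m := by
  rw [nekrasovDenom, nekrasovDenom, inv_inv, mul_comm]

theorem nekrasovDenom_ne_zero {t Q : K} (ht : t ≠ 0) (hQ : Q ≠ 0)
    (htru : ∀ s : ℕ, 0 < s → t ^ s ≠ 1) (hQt : ∀ k : ℤ, Q ≠ t ^ k) (n m : ℕ) :
    nekrasovDenom t Q n m ≠ 0 := by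
  have hA : ∀ k : ℕ, ∀ s ∈ Icc 1 k, 1 - t ^ (-(s : ℤ)) ≠ 0 := fun k s hs =>
    one_sub_zpow_ne_zero htru (by simp only [mem_Icc] at hs; omega)
  simp only [nekrasovDenom, mul_ne_zero_iff, prod_ne_zero_iff]
  exact ⟨fun s hs => ⟨hA n s hs, one_sub_inv_mul_zpow_ne_zero hQ hQt _⟩,
    fun s hs => ⟨hA m s hs, one_sub_mul_zpow_ne_zero ht hQt _⟩⟩

theorem nekrasovDenom_succ_right (t Q : K) (n m : ℕ) :
    nekrasovDenom t Q n (m + 1) * (1 - Q⁻¹ * t ^ ((n : ℤ) - m - 1)) =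
      nekrasovDenom t Q n m * ((1 - t ^ (-((m : ℤ) + 1))) * (1 - Q⁻¹ * t ^ (-(m : ℤ) - 1)) *
        (1 - Q * t ^ ((m : ℤ) - n))) := by
  have hA := prod_Icc_succ_top (show 1 ≤ m + 1 by omega) fun s : ℕ => 1 - t ^ (-(s : ℤ))
  have hB := prod_Icc_one_succ_sub (fun e => 1 - Q⁻¹ * t ^ e) ((n : ℤ) - m) n
  rw [prod_Icc_succ_top (by omega)] at hB
  have hC := prod_Icc_one_succ_sub (fun e => 1 - Q * t ^ e) ((m : ℤ) + 1 - n) m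
  rw [sub_right_comm, add_sub_cancel_right] at hC
  simp only [nekrasovDenom, prod_mul_distrib, hA]
  push_cast at hB ⊢
  simp only [sub_add_eq_sub_sub, sub_sub_cancel_left] at hB ⊢
  rw [hC]
  set An := ∏ s ∈ Icc 1 n, (1 - t ^ (-(s : ℤ)))
  set Am := ∏ s ∈ Icc 1 m, (1 - t ^ (-(s : ℤ)))
  set C := ∏ s ∈ Icc 1 m, (1 - Q * t ^ ((m : ℤ) - n - s))
  linear_combination An * Am * C * (1 - t ^ (-((m : ℤ) + 1))) * (1 - Q * t ^ ((m : ℤ) - n)) * hB.symm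

theorem nekrasovDenom_succ_left (t Q : K) (n m : ℕ) :
    nekrasovDenom t Q (n + 1) m * (1 - Q * t ^ ((m : ℤ) - n - 1)) =
      nekrasovDenom t Q n m * ((1 - t ^ (-((n : ℤ) + 1))) * (1 - Q * t ^ (-(n : ℤ) - 1)) *
        (1 - Q⁻¹ * t ^ ((n : ℤ) - m))) := by
  simpa only [nekrasovDenom_swap, inv_inv] using nekrasovDenom_succ_right t Q⁻¹ m n

def wzCertificate (t Q : K) (n m : ℕ) : K :=
  t ^ (-((n : ℤ) + m)) * (1 - t ^ (n : ℤ)) * (Q - t ^ (n : ℤ)) /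
    ((Q - t ^ ((n : ℤ) - m)) * nekrasovDenom t Q n m)

theorem wzCertificate_zero_left (t Q : K) (m : ℕ) : wzCertificate t Q 0 m = 0 := by
  simp [wzCertificate]

theorem wzCertificate_zero_right {t Q : K} (ht : t ≠ 0) (hQt : ∀ k : ℤ, Q ≠ t ^ k) (n : ℕ) :
    wzCertificate t Q n 0 = -(1 / nekrasovDenom t Q n 0 * (1 - t ^ (-(n : ℤ)))) := by
  have hQn := sub_ne_zero.2 (hQt n)
  have htn := zpow_ne_zero (n : ℤ) ht
  rw [wzCertificate, Nat.cast_zero, add_zero, sub_zero, zpow_neg]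
  field_simp
  ring

theorem wz_step {t Q : K} (ht : t ≠ 0) (hQ : Q ≠ 0) (htru : ∀ s : ℕ, 0 < s → t ^ s ≠ 1)
    (hQt : ∀ k : ℤ, Q ≠ t ^ k) (n m : ℕ) :
    1 / nekrasovDenom t Q n (m + 1) * (1 - t ^ (-((n + m + 1 : ℕ) : ℤ))) -
        1 / nekrasovDenom t Q n m =
      wzCertificate t Q (n + 1) m - wzCertificate t Q n (m + 1) := by
  have hD := nekrasovDenom_ne_zero ht hQ htru hQt n m
  rw [wzCertificate, wzCertificate,
    eq_div_of_mul_eq (one_sub_inv_mul_zpow_ne_zero hQ hQt _) (nekrasovDenom_succ_right t Q n m),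
    eq_div_of_mul_eq (one_sub_mul_zpow_ne_zero ht hQt _) (nekrasovDenom_succ_left t Q n m)]
  have hA : 1 - t ^ (-((m : ℤ) + 1)) ≠ 0 ∧ 1 - t ^ (-((n : ℤ) + 1)) ≠ 0 :=
    ⟨one_sub_zpow_ne_zero htru (by omega), one_sub_zpow_ne_zero htru (by omega)⟩
  have hB : 1 - Q⁻¹ * t ^ (-(m : ℤ) - 1) ≠ 0 ∧ 1 - Q⁻¹ * t ^ ((n : ℤ) - m - 1) ≠ 0 ∧
      1 - Q⁻¹ * t ^ ((n : ℤ) - m) ≠ 0 :=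
    ⟨one_sub_inv_mul_zpow_ne_zero hQ hQt _, one_sub_inv_mul_zpow_ne_zero hQ hQt _,
      one_sub_inv_mul_zpow_ne_zero hQ hQt _⟩
  have hC : 1 - Q * t ^ ((m : ℤ) - n) ≠ 0 ∧ 1 - Q * t ^ ((m : ℤ) - n - 1) ≠ 0 ∧
      1 - Q * t ^ (-(n : ℤ) - 1) ≠ 0 :=
    ⟨one_sub_mul_zpow_ne_zero ht hQt _, one_sub_mul_zpow_ne_zero ht hQt _,
      one_sub_mul_zpow_ne_zero ht hQt _⟩
  have hG : Q - t ^ ((n : ℤ) + 1 - m) ≠ 0 ∧ Q - t ^ ((n : ℤ) - (m + 1)) ≠ 0 :=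
    ⟨sub_ne_zero.2 (hQt _), sub_ne_zero.2 (hQt _)⟩
  have hx := zpow_ne_zero (n : ℤ) ht
  have hy := zpow_ne_zero (m : ℤ) ht
  push_cast
  simp only [zpow_add₀ ht, zpow_sub₀ ht, zpow_neg, zpow_one] at hA hB hC hG ⊢
  generalize t ^ (n : ℤ) = x at *
  generalize t ^ (m : ℤ) = y at *
  field_simp at hA hB hC hG
  simp only [div_ne_zero_iff] at hA hB hC hG
  field_simp [hA, hB, hC, hG]
  ring

theorem sum_antidiagonal_one_div_nekrasovDenom {t Q : K} (ht : t ≠ 0) (hQ : Q ≠ 0)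
    (htru : ∀ s : ℕ, 0 < s → t ^ s ≠ 1) (hQt : ∀ k : ℤ, Q ≠ t ^ k) (N : ℕ) :
    ∑ p ∈ antidiagonal N, 1 / nekrasovDenom t Q p.1 p.2 =
      1 / ∏ s ∈ Icc 1 N, (1 - t ^ (-(s : ℤ))) := by
  induction N with
  | zero => simp [nekrasovDenom]
  | succ N ih =>
    have hrec := sum_antidiagonal_succ_mul_eq_of_wz (fun n m => 1 / nekrasovDenom t Q n m)
      (wzCertificate t Q) (fun k => 1 - t ^ (-(k : ℤ))) (wz_step ht hQ htru hQt)
      (wzCertificate_zero_left t Q) (wzCertificate_zero_right ht hQt) N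
    rw [eq_div_of_mul_eq (one_sub_zpow_ne_zero htru (by omega)) hrec, ih, div_div,
      prod_Icc_succ_top (by omega)]

/-- **Crystallized simplest 5D AGT identity.**
For every `N ≥ 0`,
`Σ_{n+m=N} 1 / [ ∏_{s=1}^{n}(1−t^{−s})(1−Q^{−1}t^{n−m−s}) · ∏_{s=1}^{m}(1−t^{−s})(1−Qt^{m−n−s}) ]
  = 1 / ∏_{s=1}^{N}(1−t^{−s})`,
stated for all complex `t, Q` for which every factor appearing in a denominator is nonzero
(guaranteed here by `t ≠ 0`, `t` not a root of unity, `Q ≠ 0` and `Q ∉ {t^k : k ∈ ℤ}`). -/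
theorem crystallized_pure_AGT_identity (N : ℕ) (t Q : ℂ) (ht : t ≠ 0) (hQ : Q ≠ 0)
    (htru : ∀ s : ℕ, 0 < s → t ^ s ≠ 1) (hQt : ∀ k : ℤ, Q ≠ t ^ k) :
    ∑ p ∈ Finset.HasAntidiagonal.antidiagonal N,
        (1 : ℂ) /
          ((∏ s ∈ Finset.Icc 1 p.1,
              ((1 - t ^ (-(s : ℤ))) * (1 - Q⁻¹ * t ^ ((p.1 : ℤ) - (p.2 : ℤ) - (s : ℤ))))) *
            ∏ s ∈ Finset.Icc 1 p.2,
              ((1 - t ^ (-(s : ℤ))) * (1 - Q * t ^ ((p.2 : ℤ) - (p.1 : ℤ) - (s : ℤ)))))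
      = 1 / ∏ s ∈ Finset.Icc 1 N, (1 - t ^ (-(s : ℤ))) :=
  sum_antidiagonal_one_div_nekrasovDenom ht hQ htru hQt N
end

section
/- Fix an integer d ≥ 0 and complex numbers t, Q with t ≠ 0, t not a root of unity, Q ≠ 0, and Q ∉ {t^k : k ∈ ℤ}. Then, as q → 0 (through complex values where the expression is defined), Σ_{(λ,μ) partitions, |λ|+|μ| = d} (t/q)^{2d} / [ N_{λλ}(1; q, t) · N_{λμ}(Q; q, t) · N_{μμ}(1; q, t) · N_{μλ}(Q^{−1}; q, t) ] tends to Σ_{(n,m): n,m ≥ 0, n+m = d} 1 / [ ∏_{s=1}^{n}(1 − t^{−s})(1 − Q^{−1} t^{n−m−s}) · ∏_{s=1}^{m}(1 − t^{−s})(1 − Q t^{m−n−s}) ]. -/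
open Finset Filter Topology

/-- `i`-th part (1-indexed) of a partition given as a list of parts; `0` beyond the length. -/
def partAt (L : List ℕ) (i : ℕ) : ℕ := L.getD (i - 1) 0

/-- `j`-th part (1-indexed) of the conjugate partition: `#{i : λ_i ≥ j}`. -/
def conjAt (L : List ℕ) (j : ℕ) : ℕ := (L.filter (fun x => j ≤ x)).length

/-- Arm length `A_λ(i,j) = λ_i − j` (cells are 1-indexed; may be negative). -/
def armA (L : List ℕ) (i j : ℕ) : ℤ := (partAt L i : ℤ) - (j : ℤ)

/-- Leg length `L_λ(i,j) = λ′_j − i` (cells are 1-indexed; may be negative). -/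
def legA (L : List ℕ) (i j : ℕ) : ℤ := (conjAt L j : ℤ) - (i : ℤ)

/-- The 5D Nekrasov factor
`N_{λμ}(Q; q, t) = ∏_{(i,j)∈λ} (1 − Q q^{A_λ(i,j)} t^{L_μ(i,j)+1})
  · ∏_{(i,j)∈μ} (1 − Q q^{−A_μ(i,j)−1} t^{−L_λ(i,j)})`,
with the product over cells written as a double product. -/
noncomputable def nekrasov (q t Q : ℂ) (lam mu : List ℕ) : ℂ :=
  (∏ i ∈ Finset.Icc 1 lam.length, ∏ j ∈ Finset.Icc 1 (partAt lam i),
      (1 - Q * q ^ armA lam i j * t ^ (legA mu i j + 1))) *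
    ∏ i ∈ Finset.Icc 1 mu.length, ∏ j ∈ Finset.Icc 1 (partAt mu i),
      (1 - Q * q ^ (-armA mu i j - 1) * t ^ (-legA lam i j))

/-- The weakly decreasing list of parts of a partition of `k`. -/
def plist {k : ℕ} (P : Nat.Partition k) : List ℕ := (P.parts.sort (· ≤ ·)).reverse
/-!
Clearing the poles of the second product gives `N_{λμ}(Q) = q^{-p(μ)} R_{λμ}(Q; q)` with `R`
polynomial in `q` and `p(μ) = Σ_{(i,j)∈μ} (μ_i − j + 1)`, so the `(λ, μ)` term equals
`t^{2d} q^{2p(λ)+2p(μ)−2d} / R(q)` with `R = R_{λλ}(1) R_{λμ}(Q) R_{μμ}(1) R_{μλ}(Q⁻¹)`.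
At `q = 0` the first product of `R_{λμ}(Q)` keeps only the factors `1 − Q t^{L+1}` of the last
cells of the rows of `λ`. They are nonzero when `Q ∉ t^ℤ`, and also when `Q = 1` and `λ = μ`,
since then `L ≥ 0` and `t` is not a root of unity; hence `R(0) ≠ 0`. As `p(λ) ≥ |λ|`, with
equality exactly for a single column `λ = 1^n`, only pairs of columns survive the limit, and for
those the factors of `R(0)` pair up into the crystal products.
-/

noncomputable def nekrasovNum (q t Q : ℂ) (lam mu : List ℕ) : ℂ :=
  (∏ i ∈ Icc 1 lam.length, ∏ j ∈ Icc 1 (partAt lam i),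
      (1 - Q * q ^ (partAt lam i - j) * t ^ (legA mu i j + 1))) *
    ∏ i ∈ Icc 1 mu.length, ∏ j ∈ Icc 1 (partAt mu i),
      (q ^ (partAt mu i - j + 1) - Q * t ^ (-legA lam i j))

def rowPoleOrder (a : ℕ) : ℕ := ∑ j ∈ Icc 1 a, (a - j + 1)

def poleOrder (L : List ℕ) : ℕ := ∑ i ∈ Icc 1 L.length, rowPoleOrder (partAt L i)

theorem nekrasov_eq_inv_pow_mul_nekrasovNum {q : ℂ} (hq : q ≠ 0) (t Q : ℂ) (lam mu : List ℕ) :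
    nekrasov q t Q lam mu = (q ^ poleOrder mu)⁻¹ * nekrasovNum q t Q lam mu := by
  unfold nekrasov nekrasovNum poleOrder rowPoleOrder
  rw [mul_left_comm]
  congr 1
  · refine prod_congr rfl fun i _ => prod_congr rfl fun j hj => ?_
    have : armA lam i j = ((partAt lam i - j : ℕ) : ℤ) := by
      unfold armA; have := (mem_Icc.mp hj).2; omega
    rw [this, zpow_natCast]
  · simp only [← prod_pow_eq_pow_sum, ← prod_inv_distrib, ← prod_mul_distrib]
    refine prod_congr rfl fun i _ => prod_congr rfl fun j hj => ?_
    have : -armA mu i j - 1 = -((partAt mu i - j + 1 : ℕ) : ℤ) := by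
      unfold armA; have := (mem_Icc.mp hj).2; omega
    rw [this, zpow_neg, zpow_natCast, mul_sub, inv_mul_cancel₀ (pow_ne_zero _ hq)]
    ring

theorem nekrasovNum_zero_ne_zero {t Q : ℂ} (ht : t ≠ 0) (hQ : Q ≠ 0) {lam mu : List ℕ}
    (hlast : ∀ i ∈ Icc 1 lam.length, Q * t ^ (legA mu i (partAt lam i) + 1) ≠ 1) :
    nekrasovNum 0 t Q lam mu ≠ 0 := by
  unfold nekrasovNum
  refine mul_ne_zero (prod_ne_zero_iff.mpr fun i hi => prod_ne_zero_iff.mpr fun j hj => ?_)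
    (prod_ne_zero_iff.mpr fun i _ => prod_ne_zero_iff.mpr fun j _ => ?_)
  · rcases (mem_Icc.mp hj).2.lt_or_eq with hlt | rfl
    · simp [zero_pow (Nat.sub_ne_zero_of_lt hlt)]
    · simpa [sub_eq_zero] using (hlast i hi).symm
  · simpa using mul_ne_zero hQ (zpow_ne_zero (-legA lam i j) ht)

theorem le_conjAt_partAt {L : List ℕ} (hL : L.Pairwise (· ≥ ·)) {i : ℕ}
    (hi : i ∈ Icc 1 L.length) : i ≤ conjAt L (partAt L i) := by
  obtain ⟨h1, h2⟩ := mem_Icc.mp hi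
  have hlt : i - 1 < L.length := by omega
  unfold conjAt partAt
  rw [List.getD_eq_getElem L 0 hlt]
  have htake : (L.take i).filter (fun x => L[i - 1] ≤ x) = L.take i := by
    refine List.filter_eq_self.mpr fun x hx => ?_
    obtain ⟨a, ha, rfl⟩ := List.mem_iff_getElem.mp hx
    rw [List.length_take] at ha
    rw [List.getElem_take, decide_eq_true_eq]
    rcases (show a ≤ i - 1 by omega).lt_or_eq with h | h
    · exact List.pairwise_iff_getElem.mp hL a (i - 1) _ _ h
    · simp [h]
  have := ((List.take_sublist i L).filter (fun x => L[i - 1] ≤ x)).length_le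
  rwa [htake, List.length_take, min_eq_left h2] at this

theorem nekrasovNum_zero_self_ne_zero {t : ℂ} (ht : t ≠ 0) (htru : ∀ n : ℕ, 0 < n → t ^ n ≠ 1)
    {lam : List ℕ} (hlam : lam.Pairwise (· ≥ ·)) : nekrasovNum 0 t 1 lam lam ≠ 0 := by
  refine nekrasovNum_zero_ne_zero ht one_ne_zero fun i hi => ?_
  have hleg : 0 ≤ legA lam i (partAt lam i) := by
    have := le_conjAt_partAt hlam hi
    unfold legA; omega
  rw [one_mul, ← Int.toNat_of_nonneg (by omega : 0 ≤ legA lam i (partAt lam i) + 1),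
    zpow_natCast]
  exact htru _ (by omega)

theorem partAt_replicate_one {n i : ℕ} (hi : i ∈ Icc 1 n) :
    partAt (List.replicate n 1) i = 1 := by
  have := mem_Icc.mp hi
  simp [partAt, List.getD_eq_getElem?_getD, show i - 1 < n by omega]

theorem conjAt_replicate_one (n : ℕ) : conjAt (List.replicate n 1) 1 = n := by
  simp [conjAt]

theorem nekrasovNum_zero_replicate (t Q : ℂ) (n m : ℕ) :
    nekrasovNum 0 t Q (List.replicate n 1) (List.replicate m 1) =
      (∏ i ∈ Icc 1 n, (1 - Q * t ^ ((m : ℤ) - i + 1))) *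
        ∏ i ∈ Icc 1 m, -(Q * t ^ ((i : ℤ) - n)) := by
  unfold nekrasovNum
  simp only [List.length_replicate]
  congr 1
  · refine prod_congr rfl fun i hi => ?_
    simp [partAt_replicate_one hi, legA, conjAt_replicate_one]
  · refine prod_congr rfl fun i hi => ?_
    simp [partAt_replicate_one hi, legA, conjAt_replicate_one]

/-- Reindexing by `s = n + 1 − i` turns the factors `t (1 − Q⁻¹ t^{i−m−1})` into the crystal
ones. -/
theorem prod_column_pair {t : ℂ} (ht : t ≠ 0) {Q : ℂ} (hQ : Q ≠ 0) (n m : ℕ) :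
    (∏ i ∈ Icc 1 n, (1 - Q * t ^ ((m : ℤ) - i + 1))) * ∏ i ∈ Icc 1 n, -(Q⁻¹ * t ^ ((i : ℤ) - m)) =
      t ^ n * ∏ s ∈ Icc 1 n, (1 - Q⁻¹ * t ^ ((n : ℤ) - m - s)) := by
  have hpair : ∀ i : ℕ, (1 - Q * t ^ ((m : ℤ) - i + 1)) * -(Q⁻¹ * t ^ ((i : ℤ) - m)) =
      t * (1 - Q⁻¹ * t ^ ((i : ℤ) - m - 1)) := by
    intro i
    have h1 : t ^ ((m : ℤ) - i + 1) * t ^ ((i : ℤ) - m) = t := by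
      rw [← zpow_add₀ ht, show (m : ℤ) - i + 1 + (i - m) = 1 by ring, zpow_one]
    have h2 : t ^ ((i : ℤ) - m) = t * t ^ ((i : ℤ) - m - 1) := by
      rw [← zpow_one_add₀ ht, add_sub_cancel]
    linear_combination Q * Q⁻¹ * h1 + t * mul_inv_cancel₀ hQ - Q⁻¹ * h2
  rw [← prod_mul_distrib, prod_congr rfl fun i _ => hpair i, prod_mul_distrib, prod_const,
    Nat.card_Icc, Nat.add_sub_cancel]
  congr 1
  refine prod_nbij' (fun i => n + 1 - i) (fun s => n + 1 - s) ?_ ?_ ?_ ?_ ?_ <;>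
    intro i hi <;> simp only [mem_Icc] at hi ⊢
  · omega
  · omega
  · omega
  · omega
  · rw [Nat.cast_sub (by omega)]; push_cast; ring_nf

theorem nekrasovNum_zero_replicate_self {t : ℂ} (ht : t ≠ 0) (n : ℕ) :
    nekrasovNum 0 t 1 (List.replicate n 1) (List.replicate n 1) =
      t ^ n * ∏ s ∈ Icc 1 n, (1 - t ^ (-(s : ℤ))) := by
  have := prod_column_pair ht one_ne_zero n n
  simp only [inv_one, one_mul, sub_self, zero_sub] at this
  rw [nekrasovNum_zero_replicate]
  simpa only [one_mul] using this

theorem nekrasovNum_zero_replicate_mul_inv {t : ℂ} (ht : t ≠ 0) {Q : ℂ} (hQ : Q ≠ 0) (n m : ℕ) :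
    nekrasovNum 0 t Q (List.replicate n 1) (List.replicate m 1) *
        nekrasovNum 0 t Q⁻¹ (List.replicate m 1) (List.replicate n 1) =
      t ^ n * (∏ s ∈ Icc 1 n, (1 - Q⁻¹ * t ^ ((n : ℤ) - m - s))) *
        (t ^ m * ∏ s ∈ Icc 1 m, (1 - Q * t ^ ((m : ℤ) - n - s))) := by
  have hn := prod_column_pair ht hQ n m
  have hm := prod_column_pair ht (inv_ne_zero hQ) m n
  rw [inv_inv] at hm
  rw [nekrasovNum_zero_replicate, nekrasovNum_zero_replicate, ← hn, ← hm]
  ring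

noncomputable def pureDenomNum (q t Q : ℂ) (lam mu : List ℕ) : ℂ :=
  nekrasovNum q t 1 lam lam * nekrasovNum q t Q lam mu * nekrasovNum q t 1 mu mu *
    nekrasovNum q t Q⁻¹ mu lam

noncomputable def crystalDenom (t Q : ℂ) (n m : ℕ) : ℂ :=
  (∏ s ∈ Icc 1 n, ((1 - t ^ (-(s : ℤ))) * (1 - Q⁻¹ * t ^ ((n : ℤ) - (m : ℤ) - (s : ℤ))))) *
    ∏ s ∈ Icc 1 m, ((1 - t ^ (-(s : ℤ))) * (1 - Q * t ^ ((m : ℤ) - (n : ℤ) - (s : ℤ))))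

theorem continuous_pureDenomNum (t Q : ℂ) (lam mu : List ℕ) :
    Continuous fun q : ℂ => pureDenomNum q t Q lam mu := by
  unfold pureDenomNum nekrasovNum; fun_prop

theorem pureDenomNum_zero_replicate {t : ℂ} (ht : t ≠ 0) {Q : ℂ} (hQ : Q ≠ 0) (n m : ℕ) :
    pureDenomNum 0 t Q (List.replicate n 1) (List.replicate m 1) =
      t ^ (2 * (n + m)) * crystalDenom t Q n m := by
  unfold pureDenomNum crystalDenom
  rw [mul_right_comm _ _ (nekrasovNum 0 t 1 _ _), mul_assoc,
    nekrasovNum_zero_replicate_mul_inv ht hQ, nekrasovNum_zero_replicate_self ht,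
    nekrasovNum_zero_replicate_self ht, prod_mul_distrib, prod_mul_distrib]
  ring

theorem pureDenomNum_zero_ne_zero {t : ℂ} (ht : t ≠ 0) (htru : ∀ n : ℕ, 0 < n → t ^ n ≠ 1)
    {Q : ℂ} (hQ : Q ≠ 0) (hQt : ∀ k : ℤ, Q ≠ t ^ k) {lam mu : List ℕ}
    (hlam : lam.Pairwise (· ≥ ·)) (hmu : mu.Pairwise (· ≥ ·)) :
    pureDenomNum 0 t Q lam mu ≠ 0 := by
  refine mul_ne_zero (mul_ne_zero (mul_ne_zero (nekrasovNum_zero_self_ne_zero ht htru hlam) ?_)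
    (nekrasovNum_zero_self_ne_zero ht htru hmu)) ?_
  · refine nekrasovNum_zero_ne_zero ht hQ fun i _ h => hQt (-(legA mu i (partAt lam i) + 1)) ?_
    rw [zpow_neg]
    exact (mul_eq_one_iff_eq_inv₀ (zpow_ne_zero _ ht)).mp h
  · exact nekrasovNum_zero_ne_zero ht (inv_ne_zero hQ) fun i _ h =>
      hQt _ ((inv_mul_eq_one₀ hQ).mp h)

theorem tendsto_pure_term {t Q : ℂ} {lam mu : List ℕ} {d : ℕ}
    (hR : pureDenomNum 0 t Q lam mu ≠ 0) (hd : 2 * d ≤ 2 * poleOrder lam + 2 * poleOrder mu) :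
    Tendsto (fun q : ℂ => (t / q) ^ (2 * d) /
        (nekrasov q t 1 lam lam * nekrasov q t Q lam mu * nekrasov q t 1 mu mu *
          nekrasov q t Q⁻¹ mu lam)) (𝓝[≠] 0)
      (𝓝 (t ^ (2 * d) * 0 ^ (2 * poleOrder lam + 2 * poleOrder mu - 2 * d) /
        pureDenomNum 0 t Q lam mu)) := by
  obtain ⟨e, he⟩ := Nat.exists_eq_add_of_le hd
  have hcont : ContinuousAt (fun q : ℂ => t ^ (2 * d) * q ^ e / pureDenomNum q t Q lam mu) 0 :=
    (continuous_const.mul (continuous_pow e)).continuousAt.div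
      (continuous_pureDenomNum t Q lam mu).continuousAt hR
  rw [he, Nat.add_sub_cancel_left]
  refine (hcont.tendsto.mono_left nhdsWithin_le_nhds).congr' ?_
  filter_upwards [self_mem_nhdsWithin] with q hq
  have hpow : q ^ (2 * d) * q ^ e = (q ^ poleOrder lam) ^ 2 * (q ^ poleOrder mu) ^ 2 := by
    rw [← pow_add, ← he]; ring
  have hden : nekrasov q t 1 lam lam * nekrasov q t Q lam mu * nekrasov q t 1 mu mu *
      nekrasov q t Q⁻¹ mu lam = (q ^ (2 * d) * q ^ e)⁻¹ * pureDenomNum q t Q lam mu := by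
    simp only [nekrasov_eq_inv_pow_mul_nekrasovNum hq, pureDenomNum, hpow]
    ring
  rw [hden, div_pow]
  field_simp
  exact (mul_div_mul_right _ _ (pow_ne_zero _ hq)).symm

theorem sum_Icc_partAt {M : Type*} [AddCommMonoid M] (f : ℕ → M) (L : List ℕ) :
    ∑ i ∈ Icc 1 L.length, f (partAt L i) = (L.map f).sum := by
  have hrange : ∀ L : List ℕ, ∑ k ∈ range L.length, f (L.getD k 0) = (L.map f).sum := by
    intro L
    induction L with
    | nil => simp
    | cons a L ih =>
      rw [List.length_cons, sum_range_succ', List.map_cons, List.sum_cons, ← ih, add_comm]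
      simp only [List.getD_cons_succ, List.getD_cons_zero]
  rw [← Ico_add_one_right_eq_Icc, sum_Ico_eq_sum_range, Nat.add_sub_cancel, ← hrange]
  simp [partAt, add_comm 1]

theorem le_rowPoleOrder (a : ℕ) : a ≤ rowPoleOrder a := by
  calc a = ∑ _j ∈ Icc 1 a, 1 := by simp
    _ ≤ rowPoleOrder a := sum_le_sum fun j _ => by omega

theorem lt_rowPoleOrder {a : ℕ} (ha : 2 ≤ a) : a < rowPoleOrder a := by
  calc a = ∑ _j ∈ Icc 1 a, 1 := by simp
    _ < rowPoleOrder a :=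
      sum_lt_sum (fun j _ => by omega) ⟨1, mem_Icc.mpr ⟨le_rfl, by omega⟩, by omega⟩

theorem poleOrder_replicate_one (n : ℕ) : poleOrder (List.replicate n 1) = n := by
  rw [poleOrder, sum_Icc_partAt]
  simp [rowPoleOrder]

def Nat.Partition.ones (n : ℕ) : n.Partition := .ofComposition n (.ones n)

theorem Nat.Partition.ones_parts (n : ℕ) : (ones n).parts = Multiset.replicate n 1 := by
  simp [ones, Multiset.coe_replicate]

theorem Nat.Partition.eq_ones_of_forall_le_one {n : ℕ} {P : n.Partition}
    (h : ∀ a ∈ P.parts, a ≤ 1) : P = ones n := by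
  have hone : ∀ a ∈ P.parts, a = 1 := fun a ha => le_antisymm (h a ha) (P.parts_pos ha)
  have hcard : P.parts.card = n := by
    have hsum := P.parts_sum
    rw [Multiset.eq_replicate_card.mpr hone, Multiset.sum_replicate, smul_eq_mul, mul_one] at hsum
    exact hsum
  exact Nat.Partition.ext (by rw [ones_parts]; exact Multiset.eq_replicate.mpr ⟨hcard, hone⟩)

theorem coe_plist {n : ℕ} (P : n.Partition) : (plist P : Multiset ℕ) = P.parts := by
  rw [plist, Multiset.coe_reverse, Multiset.sort_eq]

theorem pairwise_plist {n : ℕ} (P : n.Partition) : (plist P).Pairwise (· ≥ ·) :=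
  List.pairwise_reverse.mpr (Multiset.pairwise_sort _ _)

theorem plist_ones (n : ℕ) : plist (Nat.Partition.ones n) = List.replicate n 1 := by
  refine List.eq_replicate_iff.mpr ⟨?_, fun b hb => ?_⟩
  · rw [← Multiset.coe_card, coe_plist, Nat.Partition.ones_parts, Multiset.card_replicate]
  · rw [← Multiset.mem_coe, coe_plist, Nat.Partition.ones_parts] at hb
    exact Multiset.eq_of_mem_replicate hb

theorem poleOrder_plist {n : ℕ} (P : n.Partition) :
    poleOrder (plist P) = (P.parts.map rowPoleOrder).sum := by
  rw [poleOrder, sum_Icc_partAt, ← coe_plist, Multiset.map_coe, Multiset.sum_coe]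

theorem le_poleOrder_plist {n : ℕ} (P : n.Partition) : n ≤ poleOrder (plist P) := by
  rw [poleOrder_plist]
  calc n = (P.parts.map id).sum := by rw [Multiset.map_id, P.parts_sum]
    _ ≤ _ := Multiset.sum_map_le_sum_map _ _ fun a _ => le_rowPoleOrder a

theorem lt_poleOrder_plist {n : ℕ} {P : n.Partition} (hP : P ≠ .ones n) :
    n < poleOrder (plist P) := by
  obtain ⟨a, ha, h2⟩ : ∃ a ∈ P.parts, 2 ≤ a := by
    by_contra! h
    exact hP (Nat.Partition.eq_ones_of_forall_le_one fun a ha => by have := h a ha; omega)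
  rw [poleOrder_plist]
  calc n = (P.parts.map id).sum := by rw [Multiset.map_id, P.parts_sum]
    _ < _ := Multiset.sum_lt_sum (fun a _ => le_rowPoleOrder a) ⟨a, ha, lt_rowPoleOrder h2⟩

theorem tendsto_pure_term_partition {t Q : ℂ} (ht : t ≠ 0) (htru : ∀ n : ℕ, 0 < n → t ^ n ≠ 1)
    (hQ : Q ≠ 0) (hQt : ∀ k : ℤ, Q ≠ t ^ k) {n m : ℕ} (lam : n.Partition) (mu : m.Partition) :
    Tendsto (fun q : ℂ => (t / q) ^ (2 * (n + m)) /
        (nekrasov q t 1 (plist lam) (plist lam) * nekrasov q t Q (plist lam) (plist mu) *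
          nekrasov q t 1 (plist mu) (plist mu) * nekrasov q t Q⁻¹ (plist mu) (plist lam)))
      (𝓝[≠] 0)
      (𝓝 (if lam = .ones n ∧ mu = .ones m then 1 / crystalDenom t Q n m else 0)) := by
  have hle := le_poleOrder_plist lam
  have hle' := le_poleOrder_plist mu
  have hlim := tendsto_pure_term (d := n + m)
    (pureDenomNum_zero_ne_zero ht htru hQ hQt (pairwise_plist lam) (pairwise_plist mu))
    (by omega)
  split_ifs with h
  · obtain ⟨rfl, rfl⟩ := h
    convert hlim using 2
    rw [plist_ones, plist_ones, poleOrder_replicate_one, poleOrder_replicate_one,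
      pureDenomNum_zero_replicate ht hQ, show 2 * n + 2 * m - 2 * (n + m) = 0 by omega]
    field_simp
  · have hlt : 2 * (n + m) < 2 * poleOrder (plist lam) + 2 * poleOrder (plist mu) := by
      rcases not_and_or.mp h with h | h
      · have := lt_poleOrder_plist h; omega
      · have := lt_poleOrder_plist h; omega
    rwa [zero_pow (by omega), mul_zero, zero_div] at hlim

/-- As `q → 0` (through complex values `q ≠ 0`), the degree-`d` piece of the 5D pure gauge
Nekrasov partition function (with renormalization `Λ̃² = Λ²(q/t)^{1/2}`, i.e. weight
`(t/q)^{2d}`), summed over pairs of partitions `(λ, μ)` with `|λ| + |μ| = d`, tends to the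
degree-`d` piece of the crystallized partition function. -/
theorem nekrasov_pure_crystal_limit (d : ℕ) (t Q : ℂ) (ht0 : t ≠ 0) (hQ0 : Q ≠ 0)
    (htru : ∀ n : ℕ, 0 < n → t ^ n ≠ 1) (hQt : ∀ k : ℤ, Q ≠ t ^ k) :
    Tendsto (fun q : ℂ =>
        ∑ p ∈ Finset.HasAntidiagonal.antidiagonal d, ∑ lam : Nat.Partition p.1, ∑ mu : Nat.Partition p.2,
          (t / q) ^ (2 * d) /
            (nekrasov q t 1 (plist lam) (plist lam) * nekrasov q t Q (plist lam) (plist mu) *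
              nekrasov q t 1 (plist mu) (plist mu) * nekrasov q t Q⁻¹ (plist mu) (plist lam)))
      (𝓝[≠] 0)
      (𝓝 (∑ p ∈ Finset.HasAntidiagonal.antidiagonal d,
        1 / ((∏ s ∈ Finset.Icc 1 p.1,
                ((1 - t ^ (-(s : ℤ))) * (1 - Q⁻¹ * t ^ ((p.1 : ℤ) - (p.2 : ℤ) - (s : ℤ))))) *
              ∏ s ∈ Finset.Icc 1 p.2,
                ((1 - t ^ (-(s : ℤ))) * (1 - Q * t ^ ((p.2 : ℤ) - (p.1 : ℤ) - (s : ℤ))))))) := by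
  refine tendsto_finsetSum _ fun p hp => ?_
  obtain ⟨n, m⟩ := p
  obtain rfl : n + m = d := HasAntidiagonal.mem_antidiagonal.mp hp
  have h := tendsto_finsetSum univ fun (lam : n.Partition) _ =>
    tendsto_finsetSum univ fun (mu : m.Partition) _ =>
      tendsto_pure_term_partition ht0 htru hQ0 hQt lam mu
  simpa [ite_and, crystalDenom] using h
end

section
/- For integers n, m ≥ 0, the function q ↦ q^m · N_{(1^n),(1^m)}(Q; q, t) is a polynomial in q (with coefficients rational functions of t and Q), and its value at q = 0 equals (−1)^m Q^m t^{−nm + m(m+1)/2} ∏_{s=1}^{n} (1 − Q t^{m−s+1}). Here (1^n) denotes the column partition with n parts all equal to 1. -/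
open Finset

private lemma partAt_rep' (k i : ℕ) (h : i ∈ Finset.Icc 1 k) :
    partAt (List.replicate k 1) i = 1 := by
  simp only [Finset.mem_Icc] at h
  rw [partAt, List.getD_eq_getElem?_getD, List.getElem?_replicate]
  have : i - 1 < k := by omega
  simp [this]

private lemma conjAt_rep' (k : ℕ) : conjAt (List.replicate k 1) 1 = k := by
  simp [conjAt]

private lemma zpow_prod' (t : ℂ) (ht : t ≠ 0) (f : ℕ → ℤ) (s : Finset ℕ) :
    ∏ i ∈ s, t ^ (f i) = t ^ (∑ i ∈ s, f i) := by
  induction s using Finset.cons_induction with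
  | empty => simp
  | cons a s ha ih => rw [Finset.prod_cons, Finset.sum_cons, zpow_add₀ ht, ih]

private lemma gauss' (n m : ℕ) :
    ∑ i ∈ Finset.Icc 1 m, ((i:ℤ) - n) = -((n : ℤ) * (m : ℤ)) + (m : ℤ) * ((m : ℤ) + 1) / 2 := by
  have hS : 2 * ∑ i ∈ Finset.Icc 1 m, (i : ℤ) = (m : ℤ) * ((m : ℤ) + 1) := by
    induction m with
    | zero => simp
    | succ m ih =>
      rw [Finset.sum_Icc_succ_top (by omega)]
      push_cast
      push_cast at ih
      linear_combination ih
  rw [Finset.sum_sub_distrib, Finset.sum_const, Nat.card_Icc]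
  have hc : (n : ℤ) * (m : ℤ) = ((m + 1 - 1 : ℕ) : ℤ) * (n : ℤ) := by push_cast; ring
  rw [nsmul_eq_mul]
  omega

/-- For the column partitions `(1^n)` and `(1^m)`, the function
`q ↦ q^m · N_{(1^n),(1^m)}(Q; q, t)` is a polynomial in `q`, and its value at `q = 0` is
`(−1)^m Q^m t^{−nm + m(m+1)/2} ∏_{s=1}^{n} (1 − Q t^{m−s+1})`. -/
theorem column_nekrasov_polynomial_at_zero (n m : ℕ) (t Q : ℂ) (ht : t ≠ 0) :
    ∃ P : Polynomial ℂ,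
      (∀ q : ℂ, q ≠ 0 →
        P.eval q = q ^ m * nekrasov q t Q (List.replicate n 1) (List.replicate m 1)) ∧
      P.eval 0 =
        (-1) ^ m * Q ^ m * t ^ (-((n : ℤ) * (m : ℤ)) + (m : ℤ) * ((m : ℤ) + 1) / 2) *
          ∏ s ∈ Finset.Icc 1 n, (1 - Q * t ^ ((m : ℤ) - (s : ℤ) + 1)) := by
  set A : ℂ := ∏ s ∈ Finset.Icc 1 n, (1 - Q * t ^ ((m : ℤ) - (s : ℤ) + 1)) with hA
  refine ⟨Polynomial.C A * ∏ i ∈ Finset.Icc 1 m,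
      (Polynomial.X - Polynomial.C (Q * t ^ ((i : ℤ) - n))), ?_, ?_⟩
  · intro q hq
    have hnek : nekrasov q t Q (List.replicate n 1) (List.replicate m 1)
        = A * ∏ i ∈ Finset.Icc 1 m, (1 - Q * q⁻¹ * t ^ ((i : ℤ) - n)) := by
      unfold nekrasov
      rw [List.length_replicate, List.length_replicate]
      congr 1
      · rw [hA]
        refine Finset.prod_congr rfl fun i hi => ?_
        rw [partAt_rep' n i hi, Finset.Icc_self, Finset.prod_singleton]
        have h1 : armA (List.replicate n 1) i 1 = 0 := by
          simp [armA, partAt_rep' n i hi]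
        have h2 : legA (List.replicate m 1) i 1 + 1 = (m : ℤ) - i + 1 := by
          simp [legA, conjAt_rep']
        rw [h1, h2]
        simp
      · refine Finset.prod_congr rfl fun i hi => ?_
        rw [partAt_rep' m i hi, Finset.Icc_self, Finset.prod_singleton]
        have h1 : -armA (List.replicate m 1) i 1 - 1 = -1 := by
          simp [armA, partAt_rep' m i hi]
        have h2 : -legA (List.replicate n 1) i 1 = (i : ℤ) - n := by
          simp only [legA, conjAt_rep']
          ring
        rw [h1, h2, zpow_neg_one]
    rw [hnek]
    have hcard : (Finset.Icc 1 m).card = m := by simp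
    rw [Polynomial.eval_mul, Polynomial.eval_C, Polynomial.eval_prod]
    rw [show q ^ m * (A * ∏ i ∈ Finset.Icc 1 m, (1 - Q * q⁻¹ * t ^ ((i : ℤ) - n)))
        = A * ((∏ _i ∈ Finset.Icc 1 m, q) * ∏ i ∈ Finset.Icc 1 m, (1 - Q * q⁻¹ * t ^ ((i : ℤ) - n))) by
      rw [Finset.prod_const, hcard]; ring]
    rw [← Finset.prod_mul_distrib]
    congr 1
    refine Finset.prod_congr rfl fun i _ => ?_
    simp only [Polynomial.eval_sub, Polynomial.eval_X, Polynomial.eval_C]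
    field_simp
  · rw [Polynomial.eval_mul, Polynomial.eval_C, Polynomial.eval_prod]
    simp only [Polynomial.eval_sub, Polynomial.eval_X, Polynomial.eval_C, zero_sub]
    have hcard : (Finset.Icc 1 m).card = m := by simp
    have h1 : ∏ i ∈ Finset.Icc 1 m, -(Q * t ^ ((i : ℤ) - n))
        = (-1) ^ m * Q ^ m * t ^ (-((n : ℤ) * (m : ℤ)) + (m : ℤ) * ((m : ℤ) + 1) / 2) := by
      have : ∀ i ∈ Finset.Icc 1 m, -(Q * t ^ ((i : ℤ) - n)) = (-1) * Q * t ^ ((i : ℤ) - n) := by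
        intro i _; ring
      rw [Finset.prod_congr rfl this]
      rw [Finset.prod_mul_distrib, Finset.prod_mul_distrib, Finset.prod_const,
        Finset.prod_const, hcard, zpow_prod' t ht, gauss' n m]
    rw [h1]
    ring
end

section
/- Let λ and μ be partitions and set n(μ′) = Σ_{(i,j)∈μ} A_μ(i,j) (the sum of arm lengths of cells of μ). Then the function q ↦ q^{n(μ′)} · N_{λμ}((q/t) Q; q, t) is a polynomial in q (with coefficients rational functions of t and Q), and its value at q = 0 equals Ñ_{λμ}(Q) := (−Q t^{−1})^{|μ̌|} · t^{−Σ_{(i,j)∈μ̌} L_λ(i,j)} · ∏_{(i,j)∈μ∖μ̌} (1 − Q t^{−L_λ(i,j)−1}), where μ̌ = {(i,j) cell of μ : A_μ(i,j) > 0} and |μ̌| is its cardinality. -/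
open Finset

/-- `n(μ′) = Σ_{(i,j)∈μ} A_μ(i,j)`, the sum of the arm lengths of the cells of `μ`. -/
def armSum (mu : List ℕ) : ℕ :=
  ∑ i ∈ Finset.Icc 1 mu.length, ∑ j ∈ Finset.Icc 1 (partAt mu i), (partAt mu i - j)

/-- `|μ̌|`, the number of cells of `μ` with positive arm length,
i.e. `Σ_i (μ_i − 1)`. -/
def checkCard (mu : List ℕ) : ℕ := ∑ i ∈ Finset.Icc 1 mu.length, (partAt mu i - 1)

/-- `Σ_{(i,j)∈μ̌} L_λ(i,j)`, the sum of the leg lengths (w.r.t. `λ`) over the cells of `μ`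
with positive arm length, i.e. over cells `(i,j)` of `μ` with `j ≤ μ_i − 1`. -/
def legSumCheck (lam mu : List ℕ) : ℤ :=
  ∑ i ∈ Finset.Icc 1 mu.length, ∑ j ∈ Finset.Icc 1 (partAt mu i - 1), legA lam i j

/-- The crystallized Nekrasov factor
`Ñ_{λμ}(Q) = (−Q t^{−1})^{|μ̌|} t^{−Σ_{(i,j)∈μ̌} L_λ(i,j)} ∏_{(i,j)∈μ∖μ̌} (1 − Q t^{−L_λ(i,j)−1})`;
the cells of `μ ∖ μ̌` are exactly the cells `(i, μ_i)` for `1 ≤ i ≤ ℓ(μ)`. -/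
noncomputable def tildeNek (t Q : ℂ) (lam mu : List ℕ) : ℂ :=
  (-Q * t⁻¹) ^ checkCard mu * t ^ (-legSumCheck lam mu) *
    ∏ i ∈ Finset.Icc 1 mu.length, (1 - Q * t ^ (-legA lam i (partAt mu i) - 1))

open Polynomial

/-
After the shift `Q ↦ (q/t) Q`, every cell factor of `λ` becomes `1 - Q t^{L} q^{A+1}` with
`A ≥ 0`, and every cell factor of `μ`, multiplied by `q^{A}`, becomes `q^{A} - Q t^{-L-1}`. So
`q^{n(μ′)} N_{λμ}((q/t) Q; q, t)` is a product of polynomials in `q`. At `q = 0` the factors of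
`λ` are `1`, a cell of `μ` with positive arm contributes `-Q t^{-1} t^{-L}`, and the last cell
`(i, μ_i)` of each row contributes `1 - Q t^{-L-1}`.
-/

lemma zpow_sum₀ {K ι : Type*} [CommGroupWithZero K] {t : K} (ht : t ≠ 0) (s : Finset ι)
    (f : ι → ℤ) : t ^ (∑ i ∈ s, f i) = ∏ i ∈ s, t ^ f i := by
  induction s using Finset.cons_induction with
  | empty => simp
  | cons a s _ ih => rw [sum_cons, prod_cons, zpow_add₀ ht, ih]

lemma prod_Icc_zero_pow_sub {K : Type*} [CommRing K] {m : ℕ} (hm : 1 ≤ m) (f : ℕ → K) :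
    ∏ j ∈ Icc 1 m, ((0 : K) ^ (m - j) - f j) = (∏ j ∈ Icc 1 (m - 1), -f j) * (1 - f m) := by
  obtain ⟨n, rfl⟩ := Nat.exists_eq_add_of_le' hm
  rw [prod_Icc_succ_top (by omega), Nat.add_sub_cancel, Nat.sub_self, pow_zero]
  congr 1
  refine prod_congr rfl fun j hj => ?_
  rw [zero_pow (by have := mem_Icc.1 hj; omega), zero_sub]

section CellFactors

variable {K : Type*} [Field K] {q t : K}

lemma one_sub_div_mul_zpow_natCast (ht : t ≠ 0) (Q : K) (a : ℕ) (L : ℤ) :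
    1 - q / t * Q * q ^ (a : ℤ) * t ^ (L + 1) = 1 - Q * t ^ L * q ^ (a + 1) := by
  rw [zpow_add₀ ht, zpow_natCast, zpow_one]
  field_simp
  ring

lemma pow_mul_one_sub_div_mul_zpow_neg (hq : q ≠ 0) (ht : t ≠ 0) (Q : K) (a : ℕ) (L : ℤ) :
    q ^ a * (1 - q / t * Q * q ^ (-(a : ℤ) - 1) * t ^ (-L)) = q ^ a - Q * t ^ (-L - 1) := by
  rw [show -(a : ℤ) - 1 = -((a + 1 : ℕ) : ℤ) by push_cast; ring, zpow_neg, zpow_natCast,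
    sub_eq_add_neg (-L), zpow_add₀ ht, zpow_neg_one]
  field_simp
  ring

end CellFactors

lemma armA_eq_natCast_sub {L : List ℕ} {i j : ℕ} (hj : j ≤ partAt L i) :
    armA L i j = ((partAt L i - j : ℕ) : ℤ) := by
  rw [armA, Nat.cast_sub hj]

lemma partAt_pos {L : List ℕ} (hL : ∀ x ∈ L, 0 < x) {i : ℕ} (hi : i ∈ Icc 1 L.length) :
    0 < partAt L i := by
  rw [mem_Icc] at hi
  have hlt : i - 1 < L.length := by omega
  rw [partAt, List.getD_eq_getElem L 0 hlt]
  exact hL _ (List.getElem_mem hlt)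

lemma pow_armSum {M : Type*} [CommMonoid M] (q : M) (mu : List ℕ) :
    q ^ armSum mu = ∏ i ∈ Icc 1 mu.length, ∏ j ∈ Icc 1 (partAt mu i), q ^ (partAt mu i - j) := by
  simp only [armSum, prod_pow_eq_pow_sum]

noncomputable def nekrasovPoly (t Q : ℂ) (lam mu : List ℕ) : ℂ[X] :=
  (∏ i ∈ Icc 1 lam.length, ∏ j ∈ Icc 1 (partAt lam i),
      (1 - C (Q * t ^ legA mu i j) * X ^ (partAt lam i - j + 1))) *
    ∏ i ∈ Icc 1 mu.length, ∏ j ∈ Icc 1 (partAt mu i),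
      (X ^ (partAt mu i - j) - C (Q * t ^ (-legA lam i j - 1)))

lemma eval_nekrasovPoly {q t : ℂ} (hq : q ≠ 0) (ht : t ≠ 0) (Q : ℂ) (lam mu : List ℕ) :
    (nekrasovPoly t Q lam mu).eval q = q ^ armSum mu * nekrasov q t (q / t * Q) lam mu := by
  have hlam : ∀ i, ∀ j ∈ Icc 1 (partAt lam i),
      1 - q / t * Q * q ^ armA lam i j * t ^ (legA mu i j + 1) =
        1 - Q * t ^ legA mu i j * q ^ (partAt lam i - j + 1) := fun i j hj => by
    rw [armA_eq_natCast_sub (mem_Icc.1 hj).2, one_sub_div_mul_zpow_natCast ht]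
  have hmu : ∀ i, ∀ j ∈ Icc 1 (partAt mu i),
      q ^ (partAt mu i - j) * (1 - q / t * Q * q ^ (-armA mu i j - 1) * t ^ (-legA lam i j)) =
        q ^ (partAt mu i - j) - Q * t ^ (-legA lam i j - 1) := fun i j hj => by
    rw [armA_eq_natCast_sub (mem_Icc.1 hj).2, pow_mul_one_sub_div_mul_zpow_neg hq ht]
  simp only [nekrasovPoly, eval_mul, eval_prod, eval_sub, eval_one, eval_pow, eval_X, eval_C]
  rw [nekrasov, mul_left_comm, pow_armSum]
  simp_rw [← prod_mul_distrib]
  congr 1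
  · exact (prod_congr rfl fun i _ => prod_congr rfl (hlam i)).symm
  · exact (prod_congr rfl fun i _ => prod_congr rfl (hmu i)).symm

lemma eval_zero_nekrasovPoly {t : ℂ} (ht : t ≠ 0) (Q : ℂ) {lam mu : List ℕ}
    (hmu : ∀ x ∈ mu, 0 < x) : (nekrasovPoly t Q lam mu).eval 0 = tildeNek t Q lam mu := by
  have hcell : ∀ i j, -(Q * t ^ (-legA lam i j - 1)) = -Q * t⁻¹ * t ^ (-legA lam i j) :=
    fun i j => by rw [sub_eq_add_neg, zpow_add₀ ht, zpow_neg_one]; ring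
  have hrow : ∀ i ∈ Icc 1 mu.length, ∏ j ∈ Icc 1 (partAt mu i),
      ((0 : ℂ) ^ (partAt mu i - j) - Q * t ^ (-legA lam i j - 1)) =
        (-Q * t⁻¹) ^ (partAt mu i - 1) * (∏ j ∈ Icc 1 (partAt mu i - 1), t ^ (-legA lam i j)) *
          (1 - Q * t ^ (-legA lam i (partAt mu i) - 1)) := fun i hi => by
    rw [prod_Icc_zero_pow_sub (partAt_pos hmu hi), prod_congr rfl fun j _ => hcell i j,
      prod_mul_distrib, prod_const, Nat.card_Icc, Nat.add_sub_cancel]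
  have hlegs : t ^ (-legSumCheck lam mu) =
      ∏ i ∈ Icc 1 mu.length, ∏ j ∈ Icc 1 (partAt mu i - 1), t ^ (-legA lam i j) := by
    simp only [legSumCheck, ← sum_neg_distrib, zpow_sum₀ ht]
  simp only [nekrasovPoly, eval_mul, eval_prod, eval_sub, eval_one, eval_pow, eval_X, eval_C,
    zero_pow (Nat.succ_ne_zero _), mul_zero, sub_zero, prod_const_one, one_mul]
  rw [prod_congr rfl hrow, prod_mul_distrib, prod_mul_distrib, prod_pow_eq_pow_sum, tildeNek,
    checkCard, hlegs]

theorem nekrasov_crystal_limit_general (t Q : ℂ) (ht : t ≠ 0) (lam mu : List ℕ)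
    (hm2 : ∀ x ∈ mu, 0 < x) :
    ∃ P : Polynomial ℂ,
      (∀ q : ℂ, q ≠ 0 → P.eval q = q ^ armSum mu * nekrasov q t (q / t * Q) lam mu) ∧
      P.eval 0 = tildeNek t Q lam mu :=
  ⟨nekrasovPoly t Q lam mu, fun _ hq => eval_nekrasovPoly hq ht Q lam mu,
    eval_zero_nekrasovPoly ht Q hm2⟩

/-- For partitions `λ, μ`, the function `q ↦ q^{n(μ′)} · N_{λμ}((q/t)Q; q, t)` is a polynomial
in `q`, and its value at `q = 0` equals the crystallized Nekrasov factor `Ñ_{λμ}(Q)`. -/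
theorem nekrasov_crystal_limit (t Q : ℂ) (ht : t ≠ 0) (lam mu : List ℕ)
    (hl1 : lam.Pairwise (· ≥ ·)) (hl2 : ∀ x ∈ lam, 0 < x)
    (hm1 : mu.Pairwise (· ≥ ·)) (hm2 : ∀ x ∈ mu, 0 < x) :
    ∃ P : Polynomial ℂ,
      (∀ q : ℂ, q ≠ 0 → P.eval q = q ^ armSum mu * nekrasov q t (q / t * Q) lam mu) ∧
      P.eval 0 = tildeNek t Q lam mu :=
  nekrasov_crystal_limit_general t Q ht lam mu hm2
end

section
/- For integers n, m ≥ 0 and M ∈ ℤ with m + M ≥ 0 and n − M ≥ 0, one has Z^{(M)}_{(n,m)} + Z^{(M)}_{(m+M, n−M)} = 0 in ℚ(t). -/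
open Finset

/-- The variable `t` of the field `ℚ(t)` of rational functions. -/
noncomputable def tR : RatFunc ℚ := RatFunc.X

/-- `Z^{(M)}_{(n,m)} = t^{(n−M)m}(t^{m+M} − t^{n}) /
  [∏_{s=1}^{n}(1−t^{−s}) · ∏_{s=1}^{m+M}(1−t^{−s}) · ∏_{s=1}^{m}(1−t^{s}) · ∏_{s=1}^{n−M}(1−t^{s})]`
in `ℚ(t)` (intended for `m + M ≥ 0` and `n − M ≥ 0`). -/
noncomputable def Zres (n m : ℕ) (M : ℤ) : RatFunc ℚ :=
  tR ^ (((n : ℤ) - M) * (m : ℤ)) * (tR ^ ((m : ℤ) + M) - tR ^ (n : ℤ)) /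
    ((∏ s ∈ Finset.Icc 1 n, (1 - tR ^ (-(s : ℤ)))) *
      (∏ s ∈ Finset.Icc 1 ((m : ℤ) + M).toNat, (1 - tR ^ (-(s : ℤ)))) *
      (∏ s ∈ Finset.Icc 1 m, (1 - tR ^ s)) *
      ∏ s ∈ Finset.Icc 1 ((n : ℤ) - M).toNat, (1 - tR ^ s))

/-- The involution `(n, m) ↦ (m + M, n - M)` permutes the four products of the denominator
and reverses the sign of `t^{m+M} - t^n` while fixing `t^{(n-M)m}`. -/
theorem Zres_dual (n m : ℕ) (M : ℤ) (h1 : 0 ≤ (m : ℤ) + M) (h2 : 0 ≤ (n : ℤ) - M) :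
    Zres ((m : ℤ) + M).toNat ((n : ℤ) - M).toNat M = -Zres n m M := by
  have hn : (((m : ℤ) + M).toNat : ℤ) = m + M := Int.toNat_of_nonneg h1
  have hm : (((n : ℤ) - M).toNat : ℤ) = n - M := Int.toNat_of_nonneg h2
  have hn' : ((m : ℤ) + M - M).toNat = m := by omega
  have hm' : ((n : ℤ) - M + M).toNat = n := by omega
  unfold Zres
  rw [hn, hm, hn', hm', add_sub_cancel_right, sub_add_cancel, ← neg_div, ← mul_neg, neg_sub,
    mul_comm ((n : ℤ) - M)]
  congr 1
  ring

/-- `Z^{(M)}_{(n,m)} + Z^{(M)}_{(m+M, n−M)} = 0` in `ℚ(t)`. -/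
theorem crystal_residue_antisymm (n m : ℕ) (M : ℤ)
    (h1 : 0 ≤ (m : ℤ) + M) (h2 : 0 ≤ (n : ℤ) - M) :
    Zres n m M + Zres ((m : ℤ) + M).toNat ((n : ℤ) - M).toNat M = 0 := by
  rw [Zres_dual n m M h1 h2, add_neg_cancel]
end

section
/- For every integer N ≥ 0 and every M ∈ ℤ, the sum of Z^{(M)}_{(n,m)} over all pairs (n, m) of nonnegative integers with n + m = N, m + M ≥ 0 and n − M ≥ 0 equals 0 in ℚ(t). -/
open Finset

/-! The terms cancel in pairs under the involution `(n, m) ↦ (m + M, n - M)` of the index set: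
it fixes the denominator of `Zres` and flips the sign of the factor `t^{m+M} - t^n`, which
vanishes at the fixed points `n = m + M`. -/

lemma Zres_eq_zero_of_add_eq {n m : ℕ} {M : ℤ} (h : (m : ℤ) + M = n) : Zres n m M = 0 := by
  rw [Zres, h, sub_self, mul_zero, zero_div]

lemma Zres_add_Zres_eq_zero {n m n' m' : ℕ} {M : ℤ} (hn' : (n' : ℤ) = m + M)
    (hm' : (m' : ℤ) = n - M) : Zres n m M + Zres n' m' M = 0 := by
  have hn'M : (n' : ℤ) - M = m := by omega
  have hm'M : (m' : ℤ) + M = n := by omega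
  simp only [Zres, hn'M, hm'M, ← hn', ← hm', Int.toNat_natCast, mul_comm (m : ℤ) m']
  ring

/-- For every `N ≥ 0` and `M ∈ ℤ`, the sum of `Z^{(M)}_{(n,m)}` over all pairs `(n, m)` of
nonnegative integers with `n + m = N`, `m + M ≥ 0` and `n − M ≥ 0` vanishes in `ℚ(t)`. -/
theorem crystal_residue_sum_vanishes (N : ℕ) (M : ℤ) :
    ∑ p ∈ (Finset.HasAntidiagonal.antidiagonal N).filter
        (fun p => 0 ≤ (p.2 : ℤ) + M ∧ 0 ≤ (p.1 : ℤ) - M),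
      Zres p.1 p.2 M = 0 := by
  refine Finset.sum_involution (fun p _ => (((p.2 : ℤ) + M).toNat, ((p.1 : ℤ) - M).toNat))
    ?_ ?_ ?_ ?_ <;>
  simp only [Finset.mem_filter, Finset.HasAntidiagonal.mem_antidiagonal]
  · rintro ⟨n, m⟩ ⟨-, hm, hn⟩
    exact Zres_add_Zres_eq_zero (by simpa using hm) (by simpa using hn)
  · rintro ⟨n, m⟩ ⟨-, hm, -⟩ hne hfix
    exact absurd (Zres_eq_zero_of_add_eq (by simp only [Prod.mk.injEq] at hfix; omega)) hne
  · rintro ⟨n, m⟩ ⟨hnm, hm, hn⟩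
    omega
  · rintro ⟨n, m⟩ ⟨-, hm, hn⟩
    ext <;> simp only [Int.ofNat_toNat] <;> omega
end

section
/- For every partition λ of length l, F_λ = t^{n(λ)} in ℤ[t], where n(λ) = Σ_{i=1}^{l} (i−1) λᵢ. -/
open Finset Polynomial

/-!
Once the exponents of `z` are eliminated, `F_λ` is a sum over flows `m` on the complete acyclic
graph on `{1, …, l}` (`m (i, j)` being the exponent of `w_j / w_i`) in which every vertex `i`
receives at most `λ_i` more than it sends on, weighted by `∏ c (m (i, j))` with `c 0 = 1` and
`c k = t^k - t^(k-1)`. Removing the last vertex, its incoming flow `x` (with `∑ x ≤ λ_l`) is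
absorbed into the other vertices as `λ_i + x_i`, so by induction `F_λ` is the sum over such `x`
of `∏ c (x_i) · t^(n(λ_1 + x_1, …, λ_{l-1} + x_{l-1}))`. Since `∑_{y ≤ N} c y = t^N`
telescopes, summing one coordinate of `x` at a time gives
`∑_{∑ x ≤ N} ∏ t^((i-1) x_i) c (x_i) = t^((l-1) N)`, the missing factor `t^((l-1) λ_l)`.
-/

/-- `F_λ ∈ ℤ[t]`: the coefficient of `z^{|λ|} w₁^{λ₁} ⋯ w_l^{λ_l}` in the formal product
`∏_{i=1}^{l} (Σ_{k≥0} z^k wᵢ^k) · ∏_{1≤i<j≤l} (1 − w_j/wᵢ)(Σ_{k≥0} t^k (w_j/wᵢ)^k)`.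
It is computed by expanding the product: `km.1 i` is the exponent chosen from the `i`-th
factor `Σ_k z^k wᵢ^k`, and for a pair `p = (i,j)` with `i < j`, `km.2 p` is the exponent of
the ratio `w_j/wᵢ`, whose coefficient in `(1 − w_j/wᵢ)(Σ_k t^k (w_j/wᵢ)^k)` is `1` for
exponent `0` and `t^k − t^{k−1}` for exponent `k ≥ 1`.  The first condition discards the
irrelevant entries of `km.2`, the second matches the exponent of `z`, and the third matches
the exponent of each `wᵢ`.  Only finitely many terms contribute, so the `finsum` is the
honest coefficient. -/
noncomputable def Fhl (lam : List ℕ) : Polynomial ℤ :=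
  ∑ᶠ km : (Fin lam.length → ℕ) × (Fin lam.length × Fin lam.length → ℕ),
    if (∀ p : Fin lam.length × Fin lam.length, ¬ p.1 < p.2 → km.2 p = 0) ∧
        (∑ i, km.1 i) = lam.sum ∧
        (∀ i : Fin lam.length,
          (km.1 i : ℤ) + (∑ j, if j < i then (km.2 (j, i) : ℤ) else 0)
            - (∑ j, if i < j then (km.2 (i, j) : ℤ) else 0) = (lam.get i : ℤ))
      then ∏ p : Fin lam.length × Fin lam.length,
        (if p.1 < p.2 then
          (if km.2 p = 0 then 1 else X ^ (km.2 p) - X ^ (km.2 p - 1)) else 1)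
      else 0

theorem finsum_eq_finsum_comp_of_support_subset_range {α β M : Type*} [AddCommMonoid M]
    {f : α → M} {g : β → α} (hg : g.Injective) (hf : Function.support f ⊆ Set.range g) :
    ∑ᶠ a, f a = ∑ᶠ b, f (g b) := by
  rw [← finsum_mem_range hg, ← finsum_mem_support f]
  exact finsum_mem_inter_support_eq' f _ _ fun a ha => ⟨fun _ => hf ha, fun _ => ha⟩

theorem finite_setOf_forall_le (ι : Type*) [Finite ι] (B : ℕ) :
    {x : ι → ℕ | ∀ i, x i ≤ B}.Finite := by
  simpa [Set.pi] using Set.Finite.pi fun _ : ι => Set.finite_Iic B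

theorem finsum_ite_le_eq_sum_range {M : Type*} [AddCommMonoid M] (N : ℕ) (f : ℕ → M) :
    ∑ᶠ y, (if y ≤ N then f y else 0) = ∑ y ∈ range (N + 1), f y := by
  rw [finsum_eq_sum_of_support_subset (s := range (N + 1))]
  · exact sum_congr rfl fun y hy => if_pos (Nat.lt_succ_iff.mp (mem_range.mp hy))
  · intro y hy
    simp only [Function.mem_support, ne_eq, ite_eq_right_iff, not_forall] at hy
    simpa [Nat.lt_succ_iff] using hy.1

theorem finsum_ite_fst_eq {α β M : Type*} [DecidableEq α] [AddCommMonoid M] (g : β → α)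
    (f : β → M) :
    ∑ᶠ q : α × β, (if q.1 = g q.2 then f q.2 else 0) = ∑ᶠ b, f b := by
  have hsupp : Function.support (fun q : α × β => if q.1 = g q.2 then f q.2 else 0) ⊆
      Set.range fun b => (g b, b) := fun q hq =>
    ⟨q.2, Prod.ext (of_not_not fun h => hq (if_neg (Ne.symm h))) rfl⟩
  rw [finsum_eq_finsum_comp_of_support_subset_range
    (fun b b' h => congrArg Prod.snd h) hsupp]
  simp

namespace Fhl

noncomputable def ratioCoeff (k : ℕ) : ℤ[X] := if k = 0 then 1 else X ^ k - X ^ (k - 1)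

theorem sum_range_ratioCoeff (N : ℕ) : ∑ k ∈ range (N + 1), ratioCoeff k = X ^ N := by
  induction N with
  | zero => simp [ratioCoeff]
  | succ N ih =>
    rw [sum_range_succ, ih, ratioCoeff, if_neg N.succ_ne_zero, Nat.add_sub_cancel]
    ring

noncomputable def columnTerm (r N : ℕ) (x : Fin r → ℕ) : ℤ[X] :=
  if ∑ i, x i ≤ N then ∏ i : Fin r, X ^ ((i : ℕ) * x i) * ratioCoeff (x i) else 0

theorem hasFiniteSupport_columnTerm (r N : ℕ) : (columnTerm r N).HasFiniteSupport := by
  refine (finite_setOf_forall_le (Fin r) N).subset fun x hx i => ?_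
  rw [Function.mem_support, columnTerm, ne_eq, ite_eq_right_iff, Classical.not_imp] at hx
  exact (single_le_sum (fun j _ => Nat.zero_le (x j)) (mem_univ i)).trans hx.1

theorem columnTerm_snoc (r N : ℕ) (x : Fin r → ℕ) (y : ℕ) :
    columnTerm (r + 1) N (Fin.snoc x y) =
      if y ≤ N then columnTerm r (N - y) x * (X ^ (r * y) * ratioCoeff y) else 0 := by
  simp only [columnTerm, Fin.sum_univ_castSucc, Fin.prod_univ_castSucc, Fin.snoc_castSucc,
    Fin.snoc_last, Fin.val_castSucc, Fin.val_last]
  by_cases hy : y ≤ N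
  · simp only [if_pos hy, ite_mul, zero_mul]
    exact if_congr (by omega) rfl rfl
  · rw [if_neg hy, if_neg (by omega)]

theorem finsum_columnTerm (r N : ℕ) : ∑ᶠ x, columnTerm r N x = X ^ (r * N) := by
  induction r generalizing N with
  | zero => simp [finsum_unique, columnTerm]
  | succ r ih =>
    rw [← finsum_comp_equiv (Fin.snocEquiv fun _ => ℕ),
      finsum_curry _ ((hasFiniteSupport_columnTerm _ N).fun_comp_of_injective (Equiv.injective _))]
    have hcol : ∀ y, ∑ᶠ x, columnTerm (r + 1) N (Fin.snocEquiv (fun _ => ℕ) (y, x)) =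
        if y ≤ N then X ^ (r * N) * ratioCoeff y else 0 := by
      intro y
      simp only [Fin.snocEquiv, Equiv.coe_fn_mk, columnTerm_snoc]
      split_ifs with hy
      · rw [← finsum_mul, ih, ← mul_assoc, ← pow_add, ← Nat.mul_add, Nat.sub_add_cancel hy]
      · exact finsum_zero
    simp only [hcol, finsum_ite_le_eq_sum_range, ← mul_sum, sum_range_ratioCoeff, ← pow_add,
      Nat.succ_mul]

section Flow

variable {n : ℕ}

def inflow (m : Fin n × Fin n → ℕ) (i : Fin n) : ℕ := ∑ j, if j < i then m (j, i) else 0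

def outflow (m : Fin n × Fin n → ℕ) (i : Fin n) : ℕ := ∑ j, if i < j then m (i, j) else 0

theorem sum_inflow_eq_sum_outflow (m : Fin n × Fin n → ℕ) :
    ∑ i, inflow m i = ∑ i, outflow m i :=
  Finset.sum_comm

def IsAdmissible (lv : Fin n → ℕ) (m : Fin n × Fin n → ℕ) : Prop :=
  (∀ p : Fin n × Fin n, ¬ p.1 < p.2 → m p = 0) ∧ ∀ i, inflow m i ≤ lv i + outflow m i

noncomputable def flowWeight (m : Fin n × Fin n → ℕ) : ℤ[X] :=
  ∏ p : Fin n × Fin n, if p.1 < p.2 then ratioCoeff (m p) else 1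

open Classical in
noncomputable def flowTerm (lv : Fin n → ℕ) (m : Fin n × Fin n → ℕ) : ℤ[X] :=
  if IsAdmissible lv m then flowWeight m else 0

noncomputable def flowSum (lv : Fin n → ℕ) : ℤ[X] := ∑ᶠ m, flowTerm lv m

def extendFlow (x : Fin n → ℕ) (m : Fin n × Fin n → ℕ) : Fin (n + 1) × Fin (n + 1) → ℕ :=
  fun p => Fin.lastCases 0 (fun i => Fin.lastCases (x i) (fun j => m (i, j)) p.2) p.1

@[simp]
theorem extendFlow_last (x : Fin n → ℕ) (m : Fin n × Fin n → ℕ) (j : Fin (n + 1)) :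
    extendFlow x m (Fin.last n, j) = 0 := by
  simp [extendFlow]

@[simp]
theorem extendFlow_castSucc_last (x : Fin n → ℕ) (m : Fin n × Fin n → ℕ) (i : Fin n) :
    extendFlow x m (i.castSucc, Fin.last n) = x i := by
  simp [extendFlow]

@[simp]
theorem extendFlow_castSucc_castSucc (x : Fin n → ℕ) (m : Fin n × Fin n → ℕ) (i j : Fin n) :
    extendFlow x m (i.castSucc, j.castSucc) = m (i, j) := by
  simp [extendFlow]

theorem extendFlow_injective : (fun q : (Fin n → ℕ) × (Fin n × Fin n → ℕ) =>
    extendFlow q.1 q.2).Injective := by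
  rintro ⟨x, m⟩ ⟨x', m'⟩ h
  simp only at h
  refine Prod.ext (funext fun i => ?_) (funext fun p => ?_)
  · simpa using congrFun h (i.castSucc, Fin.last n)
  · simpa using congrFun h (p.1.castSucc, p.2.castSucc)

theorem inflow_extendFlow_castSucc (x : Fin n → ℕ) (m : Fin n × Fin n → ℕ) (i : Fin n) :
    inflow (extendFlow x m) i.castSucc = inflow m i := by
  simp [inflow, Fin.sum_univ_castSucc, (Fin.castSucc_lt_last i).not_gt]

theorem outflow_extendFlow_castSucc (x : Fin n → ℕ) (m : Fin n × Fin n → ℕ) (i : Fin n) :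
    outflow (extendFlow x m) i.castSucc = outflow m i + x i := by
  simp [outflow, Fin.sum_univ_castSucc, Fin.castSucc_lt_last]

theorem inflow_extendFlow_last (x : Fin n → ℕ) (m : Fin n × Fin n → ℕ) :
    inflow (extendFlow x m) (Fin.last n) = ∑ i, x i := by
  simp [inflow, Fin.sum_univ_castSucc, Fin.castSucc_lt_last]

theorem outflow_extendFlow_last (x : Fin n → ℕ) (m : Fin n × Fin n → ℕ) :
    outflow (extendFlow x m) (Fin.last n) = 0 := by
  simp [outflow]

theorem IsAdmissible.extendFlow_restrict {lv : Fin (n + 1) → ℕ}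
    {m : Fin (n + 1) × Fin (n + 1) → ℕ} (h : IsAdmissible lv m) :
    extendFlow (fun i => m (i.castSucc, Fin.last n)) (fun p => m (p.1.castSucc, p.2.castSucc)) =
      m := by
  funext ⟨u, v⟩
  induction u using Fin.lastCases with
  | last => simpa using (h.1 _ (Fin.le_last v).not_gt).symm
  | cast i => induction v using Fin.lastCases <;> simp

theorem isAdmissible_extendFlow_iff (lv : Fin (n + 1) → ℕ) (x : Fin n → ℕ)
    (m : Fin n × Fin n → ℕ) :
    IsAdmissible lv (extendFlow x m) ↔
      ∑ i, x i ≤ lv (Fin.last n) ∧ IsAdmissible (fun i => lv i.castSucc + x i) m := by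
  have upper : (∀ p : Fin (n + 1) × Fin (n + 1), ¬ p.1 < p.2 → extendFlow x m p = 0) ↔
      ∀ p : Fin n × Fin n, ¬ p.1 < p.2 → m p = 0 := by
    refine ⟨fun h p hp => by simpa using h (p.1.castSucc, p.2.castSucc) (by simpa using hp),
      fun h ⟨u, v⟩ huv => ?_⟩
    induction u using Fin.lastCases with
    | last => simp
    | cast i =>
      induction v using Fin.lastCases with
      | last => exact absurd (Fin.castSucc_lt_last i) huv
      | cast j => simpa using h (i, j) (by simpa using huv)
  have balance : (∀ i, inflow (extendFlow x m) i ≤ lv i + outflow (extendFlow x m) i) ↔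
      (∀ i, inflow m i ≤ lv i.castSucc + outflow m i + x i) ∧ ∑ i, x i ≤ lv (Fin.last n) := by
    simp only [Fin.forall_fin_succ', inflow_extendFlow_castSucc, outflow_extendFlow_castSucc,
      inflow_extendFlow_last, outflow_extendFlow_last, add_zero, ← add_assoc]
  rw [IsAdmissible, IsAdmissible, upper, balance]
  simp only [add_right_comm (lv _) (x _)]
  tauto

theorem flowWeight_extendFlow (x : Fin n → ℕ) (m : Fin n × Fin n → ℕ) :
    flowWeight (extendFlow x m) = (∏ i, ratioCoeff (x i)) * flowWeight m := by
  simp only [flowWeight, Fintype.prod_prod_type, Fin.prod_univ_castSucc,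
    extendFlow_castSucc_castSucc, extendFlow_castSucc_last, Fin.castSucc_lt_castSucc_iff,
    Fin.castSucc_lt_last, if_true, (Fin.le_last _).not_gt, if_false, prod_const_one, mul_one,
    prod_mul_distrib]
  ring

theorem IsAdmissible.le_sum {lv : Fin n → ℕ} {m : Fin n × Fin n → ℕ} (h : IsAdmissible lv m)
    (p : Fin n × Fin n) : m p ≤ ∑ i, lv i := by
  induction n with
  | zero => exact p.1.elim0
  | succ n ih =>
    have hm := h.extendFlow_restrict
    rw [← hm, isAdmissible_extendFlow_iff] at h
    obtain ⟨hcol, hrest⟩ := h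
    have hlv : ∑ i, lv i = ∑ i : Fin n, lv i.castSucc + lv (Fin.last n) := Fin.sum_univ_castSucc lv
    rw [← hm]
    obtain ⟨u, v⟩ := p
    induction u using Fin.lastCases with
    | last => simp
    | cast i =>
      induction v using Fin.lastCases with
      | last =>
        have := single_le_sum (fun j _ => Nat.zero_le (m (j.castSucc, Fin.last n))) (mem_univ i)
        simp only [extendFlow_castSucc_last]
        omega
      | cast j =>
        have := ih hrest (i, j)
        rw [sum_add_distrib] at this
        dsimp only at this
        simp only [extendFlow_castSucc_castSucc]
        omega

theorem IsAdmissible.of_flowTerm_ne_zero {lv : Fin n → ℕ} {m : Fin n × Fin n → ℕ}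
    (h : flowTerm lv m ≠ 0) : IsAdmissible lv m := by
  by_contra hm
  exact h (if_neg hm)

theorem hasFiniteSupport_flowTerm (lv : Fin n → ℕ) : (flowTerm lv).HasFiniteSupport :=
  (finite_setOf_forall_le _ (∑ i, lv i)).subset fun _ hm =>
    (IsAdmissible.of_flowTerm_ne_zero hm).le_sum

theorem flowTerm_extendFlow (lv : Fin (n + 1) → ℕ) (x : Fin n → ℕ) (m : Fin n × Fin n → ℕ) :
    flowTerm lv (extendFlow x m) = if ∑ i, x i ≤ lv (Fin.last n) then
      (∏ i, ratioCoeff (x i)) * flowTerm (fun i => lv i.castSucc + x i) m else 0 := by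
  have hadm := isAdmissible_extendFlow_iff lv x m
  unfold flowTerm
  split_ifs <;> simp_all [flowWeight_extendFlow]

theorem flowSum_succ (lv : Fin (n + 1) → ℕ) :
    flowSum lv = ∑ᶠ x : Fin n → ℕ, if ∑ i, x i ≤ lv (Fin.last n) then
      (∏ i, ratioCoeff (x i)) * flowSum (fun i => lv i.castSucc + x i) else 0 := by
  have hsupp : Function.support (flowTerm lv) ⊆
      Set.range fun q : (Fin n → ℕ) × (Fin n × Fin n → ℕ) => extendFlow q.1 q.2 :=
    fun m hm => ⟨(fun i => m (i.castSucc, Fin.last n), fun p => m (p.1.castSucc, p.2.castSucc)),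
      (IsAdmissible.of_flowTerm_ne_zero hm).extendFlow_restrict⟩
  rw [flowSum, finsum_eq_finsum_comp_of_support_subset_range extendFlow_injective hsupp,
    finsum_curry _ ((hasFiniteSupport_flowTerm lv).fun_comp_of_injective extendFlow_injective)]
  refine finsum_congr fun x => ?_
  simp only [flowTerm_extendFlow]
  split_ifs
  · rw [flowSum, mul_finsum]
  · exact finsum_zero

theorem flowSum_eq_X_pow (lv : Fin n → ℕ) : flowSum lv = X ^ ∑ i : Fin n, (i : ℕ) * lv i := by
  induction n with
  | zero => simp [flowSum, finsum_unique, flowTerm, IsAdmissible, flowWeight]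
  | succ n ih =>
    have hterm : ∀ x : Fin n → ℕ, (if ∑ i, x i ≤ lv (Fin.last n) then
        (∏ i, ratioCoeff (x i)) * flowSum (fun i => lv i.castSucc + x i) else 0) =
        X ^ (∑ i : Fin n, (i : ℕ) * lv i.castSucc) * columnTerm n (lv (Fin.last n)) x := by
      intro x
      rw [ih, columnTerm]
      split_ifs
      · simp only [mul_add, sum_add_distrib, pow_add, prod_mul_distrib, prod_pow_eq_pow_sum]
        ring
      · rw [mul_zero]
    rw [flowSum_succ, finsum_congr hterm, ← mul_finsum, finsum_columnTerm, ← pow_add,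
      Fin.sum_univ_castSucc (f := fun i => (i : ℕ) * lv i)]
    simp

theorem fhl_condition_iff (lv k : Fin n → ℕ) (m : Fin n × Fin n → ℕ) :
    ((∀ p : Fin n × Fin n, ¬ p.1 < p.2 → m p = 0) ∧ ∑ i, k i = ∑ i, lv i ∧
      ∀ i, (k i : ℤ) + (∑ j, if j < i then (m (j, i) : ℤ) else 0)
        - (∑ j, if i < j then (m (i, j) : ℤ) else 0) = lv i) ↔
    k = (fun i => lv i + outflow m i - inflow m i) ∧ IsAdmissible lv m := by
  have hin : ∀ i, (∑ j, if j < i then (m (j, i) : ℤ) else 0) = inflow m i := by simp [inflow]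
  have hout : ∀ i, (∑ j, if i < j then (m (i, j) : ℤ) else 0) = outflow m i := by
    simp [outflow]
  simp only [hin, hout]
  constructor
  · rintro ⟨hup, -, hbal⟩
    have hk : ∀ i, inflow m i ≤ lv i + outflow m i ∧ k i = lv i + outflow m i - inflow m i :=
      fun i => by have := hbal i; omega
    exact ⟨funext fun i => (hk i).2, hup, fun i => (hk i).1⟩
  · rintro ⟨rfl, hup, hbal⟩
    refine ⟨hup, ?_, fun i => by have := hbal i; push_cast [Nat.cast_sub this]; ring⟩
    beta_reduce
    have hflow := sum_inflow_eq_sum_outflow m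
    have : ∑ i, (lv i + outflow m i - inflow m i) + ∑ i, inflow m i =
        ∑ i, lv i + ∑ i, outflow m i := by
      rw [← sum_add_distrib, ← sum_add_distrib]
      exact sum_congr rfl fun i _ => Nat.sub_add_cancel (hbal i)
    omega

end Flow

theorem eq_flowSum (lam : List ℕ) : Fhl lam = flowSum lam.get := by
  have hsum : lam.sum = ∑ i, lam.get i := by simp
  rw [Fhl, flowSum, ← finsum_ite_fst_eq (fun m i => lam.get i + outflow m i - inflow m i)]
  refine finsum_congr fun ⟨k, m⟩ => ?_
  have hcond := fhl_condition_iff lam.get k m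
  rw [← hsum] at hcond
  split_ifs with hfhl hk hk
  · rw [flowTerm, if_pos (hcond.1 hfhl).2]
    rfl
  · exact absurd (hcond.1 hfhl).1 hk
  · rw [flowTerm, if_neg fun hadm => hfhl (hcond.2 ⟨hk, hadm⟩)]
  · rfl

end Fhl

theorem Fhl_eq_t_pow_n_general (lam : List ℕ) :
    Fhl lam = X ^ (∑ i : Fin lam.length, (i : ℕ) * lam.get i) := by
  rw [Fhl.eq_flowSum, Fhl.flowSum_eq_X_pow]

/-- For every partition `λ` of length `l`, `F_λ = t^{n(λ)}` in `ℤ[t]`,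
where `n(λ) = Σ_{i=1}^{l} (i−1) λᵢ`. -/
theorem Fhl_eq_t_pow_n (lam : List ℕ) (h1 : lam.Pairwise (· ≥ ·)) (h2 : ∀ x ∈ lam, 0 < x) :
    Fhl lam = X ^ (∑ i : Fin lam.length, (i : ℕ) * lam.get i) :=
  Fhl_eq_t_pow_n_general lam
end

section
/- For every partition λ = (λ₁, …, λ_l) of length l ≥ 1, F_{(λ₁,…,λ_l)} = t^{λ₂ + ⋯ + λ_l} · F_{(λ₂,…,λ_l)} in ℤ[t]. -/
open Finset Polynomial

/-!
Expanding the product, a term of `F_λ` is given by exponents `kᵢ` of `z wᵢ` and a flow `f` on the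
pairs `i < j` (the exponent of `w_j / wᵢ`), weighted by `∏ c(f_{ij})` with `c(0) = 1` and
`c(a) = t^a - t^{a-1}`. Comparing exponents of `wᵢ` gives `kᵢ = λᵢ - (net inflow of f at i)`, so
`F_λ` is the sum of the weights of the flows whose net inflow at every vertex `i` is at most `λᵢ`;
the exponent of `z` then matches because net inflows sum to zero.

Split such a flow into its row `r` out of vertex `1` and a flow `f'` on the vertices `2, …, l`.
Vertex `1` only loses flow, so for fixed `f'` the constraints on `r` are `r_j ≤ d_j`, with
`d_j = λ_j - (net inflow of f' at j)`, independently in `j`. The sum over `r` therefore factors and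
telescopes, `∑_{a ≤ d} c(a) = t^d`; the exponents `d_j` add up to `λ₂ + ⋯ + λ_l`, and the
conditions `d_j ≥ 0` are exactly the constraints on `f'` as a flow for `(λ₂, …, λ_l)`.
-/

open Function

lemma finsum_comp_of_injective_of_support_subset {α β M : Type*} [AddCommMonoid M] {g : β → M}
    {e : α → β} (he : Injective e) (h : support g ⊆ Set.range e) :
    ∑ᶠ a, g (e a) = ∑ᶠ b, g b := by
  rw [← finsum_mem_range he, ← finsum_mem_univ g]
  exact finsum_mem_inter_support_eq' g _ _ fun b hb => iff_of_true (h hb) trivial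

lemma sum_univ_list_get (l : List ℕ) : ∑ i, l.get i = l.sum := by
  simp only [List.get_eq_getElem, Fin.sum_univ_getElem]

noncomputable def ratioCoeff (a : ℕ) : ℤ[X] := if a = 0 then 1 else X ^ a - X ^ (a - 1)

lemma sum_range_ratioCoeff (d : ℕ) : ∑ a ∈ range (d + 1), ratioCoeff a = X ^ d := by
  induction d with
  | zero => simp [ratioCoeff]
  | succ d ih =>
    rw [sum_range_succ, ih, ratioCoeff, if_neg d.succ_ne_zero, Nat.add_sub_cancel]
    ring

lemma finsum_prod_ratioCoeff {ι : Type*} [Fintype ι] [DecidableEq ι] (d : ι → ℤ)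
    [DecidablePred fun g : ι → ℕ => ∀ i, (g i : ℤ) ≤ d i] :
    ∑ᶠ g : ι → ℕ, (if ∀ i, (g i : ℤ) ≤ d i then ∏ i, ratioCoeff (g i) else 0)
      = if ∀ i, 0 ≤ d i then X ^ ∑ i, (d i).toNat else 0 := by
  split_ifs with hd
  · have hsupp : support (fun g : ι → ℕ =>
        if ∀ i, (g i : ℤ) ≤ d i then ∏ i, ratioCoeff (g i) else 0)
          ⊆ Fintype.piFinset fun i => range ((d i).toNat + 1) := by
      intro g hg
      have hg' : ∀ i, (g i : ℤ) ≤ d i := by_contra fun h => hg (if_neg h)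
      simp only [Fintype.coe_piFinset, Set.mem_pi, Set.mem_univ, coe_range, Set.mem_Iio,
        forall_const]
      intro i
      have := hg' i
      omega
    rw [finsum_eq_sum_of_support_subset _ hsupp, ← prod_pow_eq_pow_sum]
    simp_rw [← sum_range_ratioCoeff, prod_univ_sum]
    refine sum_congr rfl fun g hg => if_pos fun i => ?_
    have := mem_range.mp (Fintype.mem_piFinset.mp hg i)
    have := hd i
    omega
  · push Not at hd
    obtain ⟨i, hi⟩ := hd
    refine finsum_eq_zero_of_forall_eq_zero fun g => if_neg fun h => ?_
    exact (h i).not_gt (hi.trans_le (Nat.cast_nonneg _))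

abbrev UpperPair (N : ℕ) := {p : Fin N × Fin N // p.1 < p.2}

@[to_additive]
lemma prod_upperPair {N : ℕ} {M : Type*} [CommMonoid M] (g : Fin N × Fin N → M) :
    ∏ p : UpperPair N, g p.1 = ∏ p, if p.1 < p.2 then g p else 1 := by
  rw [← prod_filter]
  exact (prod_subtype (p := fun p : Fin N × Fin N => p.1 < p.2) _ (fun p => by simp) g).symm

noncomputable def UpperPair.succEquiv (N : ℕ) : Fin N ⊕ UpperPair N ≃ UpperPair (N + 1) :=
  Equiv.ofBijective
    (Sum.elim (fun j => ⟨(0, j.succ), Fin.succ_pos j⟩)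
      (fun q => ⟨(q.1.1.succ, q.1.2.succ), Fin.succ_lt_succ_iff.mpr q.2⟩)) <| by
    constructor
    · rintro (a | a) (b | b) h <;>
        simp only [Sum.elim_inl, Sum.elim_inr, Subtype.mk.injEq, Prod.mk.injEq, Fin.succ_inj,
          Sum.inl.injEq, Sum.inr.injEq] at h ⊢
      · exact h.2
      · exact absurd h.1.symm (Fin.succ_ne_zero _)
      · exact absurd h.1 (Fin.succ_ne_zero _)
      · exact Subtype.ext (Prod.ext h.1 h.2)
    · rintro ⟨⟨i, j⟩, h⟩
      cases j using Fin.cases with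
      | zero => exact absurd h (Fin.not_lt_zero i)
      | succ j =>
        cases i using Fin.cases with
        | zero => exact ⟨.inl j, rfl⟩
        | succ i => exact ⟨.inr ⟨(i, j), Fin.succ_lt_succ_iff.mp h⟩, rfl⟩

@[simp]
lemma UpperPair.succEquiv_inl {N : ℕ} (j : Fin N) :
    (UpperPair.succEquiv N (.inl j)).1 = (0, j.succ) := rfl

@[simp]
lemma UpperPair.succEquiv_inr {N : ℕ} (q : UpperPair N) :
    (UpperPair.succEquiv N (.inr q)).1 = (q.1.1.succ, q.1.2.succ) := rfl

section Flows

variable {N : ℕ}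

def netInflow (f : UpperPair N → ℕ) (i : Fin N) : ℤ :=
  ∑ p, (f p : ℤ) * ((if p.1.2 = i then 1 else 0) - (if p.1.1 = i then 1 else 0))

lemma sum_mul_netInflow (w : Fin N → ℤ) (f : UpperPair N → ℕ) :
    ∑ i, w i * netInflow f i = ∑ p, (f p : ℤ) * (w p.1.2 - w p.1.1) := by
  simp only [netInflow, mul_sum]
  rw [sum_comm]
  refine sum_congr rfl fun p _ => ?_
  simp only [mul_sub, mul_ite, mul_one, mul_zero, sum_sub_distrib, sum_ite_eq, mem_univ,
    if_true]
  ring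

lemma sum_netInflow (f : UpperPair N → ℕ) : ∑ i, netInflow f i = 0 := by
  simpa using sum_mul_netInflow 1 f

lemma sum_toNat_sub_netInflow {f : UpperPair N → ℕ} {τ : Fin N → ℕ}
    (h : ∀ i, netInflow f i ≤ τ i) : ∑ i, ((τ i : ℤ) - netInflow f i).toNat = ∑ i, τ i := by
  apply Nat.cast_injective (R := ℤ)
  push_cast [Int.toNat_of_nonneg (sub_nonneg.mpr (h _))]
  rw [sum_sub_distrib, sum_netInflow, sub_zero]

/-- The potential `i ↦ i` makes every unit of flow cost at least `1`. -/
lemma le_sum_mul_of_netInflow_le {f : UpperPair N → ℕ} {τ : Fin N → ℕ}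
    (h : ∀ i, netInflow f i ≤ τ i) (p : UpperPair N) : f p ≤ ∑ i : Fin N, (i : ℕ) * τ i := by
  have hterm (q : UpperPair N) : (f q : ℤ) ≤ f q * ((q.1.2 : ℕ) - (q.1.1 : ℕ) : ℤ) :=
    le_mul_of_one_le_right (Nat.cast_nonneg _) (by have := q.2; omega)
  have key : (f p : ℤ) ≤ ∑ i : Fin N, ((i : ℕ) : ℤ) * τ i := calc
    (f p : ℤ) ≤ ∑ q, f q * ((q.1.2 : ℕ) - (q.1.1 : ℕ) : ℤ) :=
      (hterm p).trans (single_le_sum (fun q _ => (Nat.cast_nonneg _).trans (hterm q))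
        (mem_univ p))
    _ = ∑ i : Fin N, ((i : ℕ) : ℤ) * netInflow f i :=
      (sum_mul_netInflow (fun i => ((i : ℕ) : ℤ)) f).symm
    _ ≤ ∑ i : Fin N, ((i : ℕ) : ℤ) * τ i :=
      sum_le_sum fun i _ => mul_le_mul_of_nonneg_left (h i) (Nat.cast_nonneg _)
  exact_mod_cast key

lemma netInflow_zero_nonpos (f : UpperPair (N + 1) → ℕ) : netInflow f 0 ≤ 0 :=
  sum_nonpos fun p _ => by
    rw [if_neg (ne_of_gt ((Fin.zero_le _).trans_lt p.2))]
    split_ifs <;> simp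

noncomputable def flowTerm (τ : Fin N → ℕ) (f : UpperPair N → ℕ) : ℤ[X] :=
  if ∀ i, netInflow f i ≤ τ i then ∏ p, ratioCoeff (f p) else 0

noncomputable def flowSum (τ : Fin N → ℕ) : ℤ[X] := ∑ᶠ f, flowTerm τ f

lemma support_flowTerm_finite (τ : Fin N → ℕ) : (support (flowTerm τ)).Finite :=
  (Set.finite_Iic fun _ => ∑ i : Fin N, (i : ℕ) * τ i).subset fun _ hf p =>
    le_sum_mul_of_netInflow_le (by_contra fun h => hf (if_neg h)) p

noncomputable def joinFlow (N : ℕ) : (UpperPair N → ℕ) × (Fin N → ℕ) ≃ (UpperPair (N + 1) → ℕ) :=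
  (Equiv.prodComm _ _).trans
    ((Equiv.sumArrowEquivProdArrow _ _ _).symm.trans
      ((UpperPair.succEquiv N).arrowCongr (Equiv.refl ℕ)))

lemma joinFlow_apply_succEquiv (f : UpperPair N → ℕ) (r : Fin N → ℕ) (s : Fin N ⊕ UpperPair N) :
    joinFlow N (f, r) (UpperPair.succEquiv N s) = Sum.elim r f s := by
  simp only [joinFlow, Equiv.trans_apply, Equiv.arrowCongr_apply, comp_apply,
    Equiv.symm_apply_apply, Equiv.refl_apply]
  cases s <;> rfl

lemma netInflow_joinFlow_succ (f : UpperPair N → ℕ) (r : Fin N → ℕ) (i : Fin N) :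
    netInflow (joinFlow N (f, r)) i.succ = r i + netInflow f i := by
  rw [netInflow, ← (UpperPair.succEquiv N).sum_comp, Fintype.sum_sum_type]
  simp only [joinFlow_apply_succEquiv, Sum.elim_inl, Sum.elim_inr, UpperPair.succEquiv_inl,
    UpperPair.succEquiv_inr, Fin.succ_inj, (Fin.succ_ne_zero i).symm, if_false, sub_zero,
    mul_ite, mul_one, mul_zero, sum_ite_eq', mem_univ, if_true, netInflow]

lemma prod_joinFlow (f : UpperPair N → ℕ) (r : Fin N → ℕ) :
    ∏ p, ratioCoeff (joinFlow N (f, r) p) = (∏ i, ratioCoeff (r i)) * ∏ q, ratioCoeff (f q) := by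
  rw [← (UpperPair.succEquiv N).prod_comp, Fintype.prod_sum_type]
  simp only [joinFlow_apply_succEquiv, Sum.elim_inl, Sum.elim_inr]

lemma flowTerm_joinFlow (τ : Fin (N + 1) → ℕ) (f : UpperPair N → ℕ) (r : Fin N → ℕ) :
    flowTerm τ (joinFlow N (f, r)) =
      (if ∀ i, (r i : ℤ) ≤ τ i.succ - netInflow f i then ∏ i, ratioCoeff (r i) else 0)
        * ∏ q, ratioCoeff (f q) := by
  have hcond : (∀ i, netInflow (joinFlow N (f, r)) i ≤ τ i) ↔
      ∀ i, (r i : ℤ) ≤ τ i.succ - netInflow f i := by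
    simp only [Fin.forall_fin_succ, netInflow_joinFlow_succ, le_sub_iff_add_le,
      (netInflow_zero_nonpos _).trans (Nat.cast_nonneg _), true_and]
  rw [flowTerm, if_congr hcond (prod_joinFlow f r) rfl, ite_mul, zero_mul]

lemma flowSum_succ (τ : Fin (N + 1) → ℕ) :
    flowSum τ = X ^ (∑ i : Fin N, τ i.succ) * flowSum (fun i => τ i.succ) := by
  have hfin : (support fun g => flowTerm τ (joinFlow N g)).Finite :=
    (support_flowTerm_finite τ).preimage (joinFlow N).injective.injOn
  rw [flowSum, flowSum, ← finsum_comp_equiv (joinFlow N), finsum_curry _ hfin, mul_finsum]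
  refine finsum_congr fun f => ?_
  rw [finsum_congr (flowTerm_joinFlow τ f), ← finsum_mul, finsum_prod_ratioCoeff]
  simp_rw [sub_nonneg, flowTerm]
  split_ifs with h
  · rw [sum_toNat_sub_netInflow (τ := fun i => τ i.succ) h]
  · rw [zero_mul, mul_zero]

def extendFlow (f : UpperPair N → ℕ) : Fin N × Fin N → ℕ :=
  fun p => if h : p.1 < p.2 then f ⟨p, h⟩ else 0

@[simp]
lemma extendFlow_val (f : UpperPair N → ℕ) (p : UpperPair N) : extendFlow f p.1 = f p :=
  dif_pos p.2

lemma extendFlow_of_not_lt (f : UpperPair N → ℕ) {p : Fin N × Fin N} (hp : ¬p.1 < p.2) :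
    extendFlow f p = 0 :=
  dif_neg hp

lemma extendFlow_injective : Injective (extendFlow (N := N)) := fun f g h =>
  funext fun p => by rw [← extendFlow_val f, ← extendFlow_val g, h]

lemma extendFlow_restrict {m : Fin N × Fin N → ℕ}
    (hm : ∀ p : Fin N × Fin N, ¬p.1 < p.2 → m p = 0) :
    extendFlow (fun p : UpperPair N => m p.1) = m :=
  funext fun p => by
    by_cases hp : p.1 < p.2
    · exact dif_pos hp
    · rw [extendFlow_of_not_lt _ hp, hm p hp]

lemma ite_lt_extendFlow_mul (f : UpperPair N → ℕ) (p : Fin N × Fin N) (c : ℤ) :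
    (if p.1 < p.2 then (extendFlow f p : ℤ) * c else 0) = extendFlow f p * c := by
  split_ifs with hp
  · rfl
  · rw [extendFlow_of_not_lt f hp, Nat.cast_zero, zero_mul]

lemma netInflow_eq_sum_extendFlow (f : UpperPair N → ℕ) (i : Fin N) :
    (∑ j, if j < i then (extendFlow f (j, i) : ℤ) else 0)
      - (∑ j, if i < j then (extendFlow f (i, j) : ℤ) else 0) = netInflow f i := by
  have h := sum_upperPair fun q : Fin N × Fin N =>
    (extendFlow f q : ℤ) * ((if q.2 = i then 1 else 0) - (if q.1 = i then 1 else 0))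
  have hin (j : Fin N) := ite_lt_extendFlow_mul f (j, i) 1
  have hout (j : Fin N) := ite_lt_extendFlow_mul f (i, j) 1
  simp only [extendFlow_val, ite_lt_extendFlow_mul] at h
  simp only [mul_one] at hin hout
  rw [netInflow, h, Fintype.sum_prod_type]
  simp only [hin, hout, mul_sub, mul_ite, mul_one, mul_zero, sum_sub_distrib, sum_ite_eq',
    mem_univ, if_true, sum_ite_irrel, sum_const_zero]

end Flows

lemma Fhl_eq_flowSum (lam : List ℕ) : Fhl lam = flowSum fun i => lam.get i := by
  have hbal (k : ℕ) (f : UpperPair lam.length → ℕ) (i : Fin lam.length) :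
      (k : ℤ) + (∑ j, if j < i then (extendFlow f (j, i) : ℤ) else 0)
        - (∑ j, if i < j then (extendFlow f (i, j) : ℤ) else 0) = lam.get i ↔
      (k : ℤ) = lam.get i - netInflow f i := by
    rw [add_sub_assoc, netInflow_eq_sum_extendFlow]
    constructor <;> intro h <;> linarith
  let e (f : UpperPair lam.length → ℕ) :
      (Fin lam.length → ℕ) × (Fin lam.length × Fin lam.length → ℕ) :=
    (fun i => ((lam.get i : ℤ) - netInflow f i).toNat, extendFlow f)
  have he : Injective e := fun f g hfg => extendFlow_injective (congrArg Prod.snd hfg)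
  rw [Fhl, flowSum, ← finsum_comp_of_injective_of_support_subset he]
  · refine finsum_congr fun f => ?_
    dsimp only [e]
    rw [flowTerm]
    refine if_congr ⟨?_, fun h => ⟨fun p hp => extendFlow_of_not_lt f hp, ?_, fun i => ?_⟩⟩ ?_ rfl
    · rintro ⟨-, -, hk⟩ i
      have := (hbal _ f i).mp (hk i)
      omega
    · rw [sum_toNat_sub_netInflow h, sum_univ_list_get]
    · have := h i
      exact (hbal _ f i).mpr (by omega)
    · exact (prod_upperPair _).symm.trans (by simp only [extendFlow_val, ratioCoeff])
  · rintro ⟨k, m⟩ hkm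
    obtain ⟨hm, -, hkm⟩ := by_contra fun h => hkm (if_neg h)
    refine ⟨fun p => m p.1, Prod.ext (funext fun i => ?_) (extendFlow_restrict hm)⟩
    have := (hbal (k i) _ i).mp (by rw [extendFlow_restrict hm]; exact hkm i)
    dsimp only [e] at this ⊢
    omega

theorem Fhl_recursion_general (lam : List ℕ) :
    Fhl lam = X ^ lam.tail.sum * Fhl lam.tail := by
  cases lam with
  | nil => simp
  | cons a l =>
    rw [List.tail_cons, Fhl_eq_flowSum, Fhl_eq_flowSum, ← sum_univ_list_get l]
    exact flowSum_succ _

/-- The recursion `F_{(λ₁,…,λ_l)} = t^{λ₂+⋯+λ_l} · F_{(λ₂,…,λ_l)}` in `ℤ[t]`, for every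
partition `λ = (λ₁, …, λ_l)` of length `l ≥ 1`. -/
theorem Fhl_recursion (lam : List ℕ) (h0 : lam ≠ [])
    (h1 : lam.Pairwise (· ≥ ·)) (h2 : ∀ x ∈ lam, 0 < x) :
    Fhl lam = X ^ lam.tail.sum * Fhl lam.tail :=
  Fhl_recursion_general lam
end

section
/- For all integers l ≥ 1 and k ≥ 1, Σ_{α ∈ ℤ_{≥0}^l, α₁+⋯+α_l = k} ( ∏_{i=1}^{l} 𝒜_{αᵢ} ) · t^{n(α)} = t^{lk} − t^{l(k−1)} in ℤ[t]; and for k = 0 the same sum equals 1. -/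
open Finset Polynomial

/-- `𝒜₀ = 1` and `𝒜_k = (t − 1) t^{k−1}` for `k ≥ 1`, in `ℤ[t]`. -/
noncomputable def AA (k : ℕ) : Polynomial ℤ :=
  if k = 0 then 1 else (X - 1) * X ^ (k - 1)

/-!
Since `Σ_k 𝒜_k y^k = (1 - y)/(1 - t y)` and `n(α)` shifts the argument of the `i`-th factor to
`t^(i-1) y`, the sum is the coefficient of `y^k` in the telescoping product
`∏_{i<l} (1 - t^i y)/(1 - t^(i+1) y) = (1 - y)/(1 - t^l y)`. Splitting off the first coordinate
of `α` performs one step of the telescoping in coefficient form.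
-/

theorem Finset.Nat.sum_antidiagonalTuple_succ {M : Type*} [AddCommMonoid M] (l k : ℕ)
    (f : (Fin (l + 1) → ℕ) → M) :
    ∑ α ∈ antidiagonalTuple (l + 1) k, f α =
      ∑ p ∈ antidiagonal k, ∑ β ∈ antidiagonalTuple l p.2, f (Fin.cons p.1 β) := by
  -- `antidiagonalTuple (l + 1) k` is defined as a list by splitting off the first coordinate.
  change (((List.Nat.antidiagonalTuple (l + 1) k : List _) : Multiset _).map f).sum =
    (((List.Nat.antidiagonal k : List (ℕ × ℕ)) : Multiset (ℕ × ℕ)).map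
      fun p : ℕ × ℕ =>
        (((List.Nat.antidiagonalTuple l p.2 : List _) : Multiset _).map
          fun β => f (Fin.cons p.1 β)).sum).sum
  simp only [Multiset.map_coe, Multiset.sum_coe, List.Nat.antidiagonalTuple, List.flatMap,
    List.map_flatten, List.sum_flatten, List.map_map, Function.comp_def]

section geomDiff

variable {R : Type*} [CommRing R]

/-- The coefficients of `(1 - y) / (1 - r y) = 1 + Σ_{k ≥ 1} (r ^ k - r ^ (k - 1)) y ^ k`. -/
def geomDiff (r : R) (k : ℕ) : R :=
  if k = 0 then 1 else (r - 1) * r ^ (k - 1)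

@[simp] theorem geomDiff_zero (r : R) : geomDiff r 0 = 1 := if_pos rfl

theorem geomDiff_succ (r : R) (k : ℕ) : geomDiff r (k + 1) = (r - 1) * r ^ k :=
  if_neg k.succ_ne_zero

theorem sum_range_succ_geomDiff (r : R) (k : ℕ) :
    ∑ b ∈ range (k + 1), geomDiff r b = r ^ k := by
  induction k with
  | zero => simp
  | succ k ih => rw [sum_range_succ, ih, geomDiff_succ]; ring

/-- The coefficient form of `(1 - y)/(1 - r y) · (1 - r y)/(1 - r q y) = (1 - y)/(1 - r q y)`. -/
theorem sum_antidiagonal_geomDiff_mul_pow_mul_geomDiff (r q : R) (k : ℕ) :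
    ∑ p ∈ antidiagonal k, geomDiff r p.1 * (r ^ p.2 * geomDiff q p.2) = geomDiff (r * q) k := by
  cases k with
  | zero => simp
  | succ n =>
    have tail : ∑ p ∈ antidiagonal n, geomDiff r (p.1 + 1) * (r ^ p.2 * geomDiff q p.2)
        = (r - 1) * r ^ n * q ^ n := calc
      _ = ∑ p ∈ antidiagonal n, (r - 1) * r ^ n * geomDiff q p.2 :=
          sum_congr rfl fun p hp => by rw [← mem_antidiagonal.1 hp, geomDiff_succ, pow_add]; ring
      _ = (r - 1) * r ^ n * ∑ i ∈ range (n + 1), geomDiff q i := by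
          rw [← mul_sum, ← Finset.Nat.sum_antidiagonal_swap]
          exact congrArg _
            (Finset.Nat.sum_antidiagonal_eq_sum_range_succ (fun i _ => geomDiff q i) n)
      _ = (r - 1) * r ^ n * q ^ n := by rw [sum_range_succ_geomDiff]
    rw [Finset.Nat.sum_antidiagonal_succ, tail]
    simp only [geomDiff_zero, geomDiff_succ]
    ring

end geomDiff

theorem AA_eq_geomDiff : AA = geomDiff X := rfl

theorem Fin.sum_val_mul_cons {l : ℕ} (a : ℕ) (β : Fin l → ℕ) :
    ∑ i : Fin (l + 1), (i : ℕ) * (Fin.cons a β : Fin (l + 1) → ℕ) i =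
      ∑ i : Fin l, (i : ℕ) * β i + ∑ i, β i := by
  simp [Fin.sum_univ_succ, add_mul, sum_add_distrib]

theorem sum_antidiagonalTuple_prod_AA_mul_X_pow (l k : ℕ) :
    ∑ α ∈ Finset.Nat.antidiagonalTuple l k,
        (∏ i, AA (α i)) * X ^ (∑ i : Fin l, (i : ℕ) * α i) = geomDiff (X ^ l) k := by
  induction l generalizing k with
  | zero => cases k <;> simp [geomDiff_succ]
  | succ l ih =>
    rw [Finset.Nat.sum_antidiagonalTuple_succ, pow_succ',
      ← sum_antidiagonal_geomDiff_mul_pow_mul_geomDiff]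
    refine sum_congr rfl fun p _ => ?_
    rw [← ih, mul_sum, mul_sum]
    refine sum_congr rfl fun β hβ => ?_
    rw [Fin.prod_univ_succ, Fin.sum_val_mul_cons, Finset.Nat.mem_antidiagonalTuple.1 hβ, pow_add,
      AA_eq_geomDiff]
    simp only [Fin.cons_zero, Fin.cons_succ]
    ring

theorem crystal_sum_identity_general (l k : ℕ) :
    (1 ≤ k →
      ∑ α ∈ Finset.Nat.antidiagonalTuple l k,
          (∏ i, AA (α i)) * X ^ (∑ i : Fin l, (i : ℕ) * α i) =
        X ^ (l * k) - X ^ (l * (k - 1))) ∧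
    (k = 0 →
      ∑ α ∈ Finset.Nat.antidiagonalTuple l k,
          (∏ i, AA (α i)) * X ^ (∑ i : Fin l, (i : ℕ) * α i) = 1) := by
  rw [sum_antidiagonalTuple_prod_AA_mul_X_pow]
  refine ⟨fun hk => ?_, fun hk => hk ▸ geomDiff_zero _⟩
  obtain ⟨m, rfl⟩ := Nat.exists_eq_add_of_le' hk
  rw [geomDiff_succ, Nat.add_sub_cancel, mul_add_one, pow_add, ← pow_mul]
  ring

/-- For `l ≥ 1` and `k ≥ 1`,
`Σ_{α ∈ ℤ_{≥0}^l, α₁+⋯+α_l = k} (∏_{i=1}^{l} 𝒜_{αᵢ}) t^{n(α)} = t^{lk} − t^{l(k−1)}`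
in `ℤ[t]`, where `n(α) = Σ_{i=1}^{l} (i−1)αᵢ`; and for `k = 0` the same sum equals `1`. -/
theorem crystal_sum_identity (l k : ℕ) (hl : 1 ≤ l) :
    (1 ≤ k →
      ∑ α ∈ Finset.Nat.antidiagonalTuple l k,
          (∏ i, AA (α i)) * X ^ (∑ i : Fin l, (i : ℕ) * α i) =
        X ^ (l * k) - X ^ (l * (k - 1))) ∧
    (k = 0 →
      ∑ α ∈ Finset.Nat.antidiagonalTuple l k,
          (∏ i, AA (α i)) * X ^ (∑ i : Fin l, (i : ℕ) * α i) = 1) :=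
  crystal_sum_identity_general l k
end

section
/- For all integers l ≥ 0 and K ≥ 0, Σ_{α ∈ ℤ_{≥0}^{l+1}, α₀+α₁+⋯+α_l = K} ( ∏_{i=1}^{l} 𝒜_{αᵢ} ) · t^{Σ_{i=1}^{l} (i−1) αᵢ} = t^{lK} in ℤ[t] (the index α₀ enters the sum but carries weight 1). -/
/-!
Split off the last coordinate `α_l = b` of the tuple. By induction the remaining coordinates,
summing to `K - b`, contribute `t^{(l-1)(K-b)}`, and the last factor is `𝒜_b t^{(l-1)b}`, so the
sum is `t^{(l-1)K} Σ_{b ≤ K} 𝒜_b`. The `𝒜_b = t^b - t^{b-1}` (`b ≥ 1`) telescope to `t^K`.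
-/

open Finset Polynomial

lemma Finset.Nat.sum_antidiagonalTuple_succ_eq_sum_snoc {M : Type*} [AddCommMonoid M] (k n : ℕ)
    (f : (Fin (k + 1) → ℕ) → M) :
    ∑ α ∈ Nat.antidiagonalTuple (k + 1) n, f α =
      ∑ p ∈ antidiagonal n, ∑ β ∈ Nat.antidiagonalTuple k p.1, f (Fin.snoc β p.2) := by
  rw [sum_sigma']
  refine sum_nbij' (fun α ↦ ⟨(∑ i, Fin.init α i, α (Fin.last k)), Fin.init α⟩)
    (fun x ↦ Fin.snoc x.2 x.1.2) ?_ ?_ ?_ ?_ ?_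
  · intro α hα
    simp_all [Nat.mem_antidiagonalTuple, Fin.sum_univ_castSucc, Fin.init]
  · rintro ⟨⟨a, b⟩, β⟩ h
    simp_all [Nat.mem_antidiagonalTuple, Fin.sum_univ_castSucc]
  · intro α _
    simp
  · rintro ⟨⟨a, b⟩, β⟩ h
    simp_all [Nat.mem_antidiagonalTuple]
  · intro α _
    simp

lemma AA_succ (k : ℕ) : AA (k + 1) = X ^ (k + 1) - X ^ k := by
  simp only [AA, Nat.add_one_ne_zero, if_false, Nat.add_sub_cancel]
  ring

lemma sum_range_AA (n : ℕ) : ∑ k ∈ range (n + 1), AA k = X ^ n := by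
  rw [sum_range_succ', sum_congr rfl fun k _ ↦ AA_succ k, sum_range_sub (X ^ ·)]
  simp [AA]

lemma sum_antidiagonal_AA_snd (n : ℕ) : ∑ p ∈ antidiagonal n, AA p.2 = X ^ n := by
  rw [← Nat.sum_antidiagonal_swap]
  simpa [Nat.sum_antidiagonal_eq_sum_range_succ_mk] using sum_range_AA n

/-- For `l ≥ 0` and `K ≥ 0`,
`Σ_{α ∈ ℤ_{≥0}^{l+1}, α₀+α₁+⋯+α_l = K} (∏_{i=1}^{l} 𝒜_{αᵢ}) · t^{Σ_{i=1}^{l}(i−1)αᵢ} = t^{lK}`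
in `ℤ[t]` (the index `α₀` enters the sum but carries weight `1`). -/
theorem crystal_sum_identity_telescoped (l K : ℕ) :
    ∑ α ∈ Finset.Nat.antidiagonalTuple (l + 1) K,
        ∏ i : Fin (l + 1),
          (if (i : ℕ) = 0 then 1 else AA (α i) * X ^ (((i : ℕ) - 1) * α i)) =
      X ^ (l * K) := by
  induction l generalizing K with
  | zero => simp [Nat.antidiagonalTuple_one]
  | succ l ih =>
    rw [Nat.sum_antidiagonalTuple_succ_eq_sum_snoc]
    calc _ = ∑ p ∈ antidiagonal K, X ^ (l * p.1) * (AA p.2 * X ^ (l * p.2)) := by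
          refine sum_congr rfl fun p _ ↦ ?_
          rw [← ih p.1, sum_mul]
          refine sum_congr rfl fun β _ ↦ ?_
          rw [Fin.prod_univ_castSucc]
          simp
      _ = X ^ (l * K) * ∑ p ∈ antidiagonal K, AA p.2 := by
          rw [mul_sum]
          refine sum_congr rfl fun p hp ↦ ?_
          rw [← mem_antidiagonal.mp hp, mul_add, pow_add]
          ring
      _ = X ^ ((l + 1) * K) := by
          rw [sum_antidiagonal_AA_snd, ← pow_add, add_one_mul]
end

section
/- For every partition λ = (λ₁, …, λ_l) of length l ≥ 1 and every integer k ≥ 0, G^{k}_{(λ₁,…,λ_l)} = t^{λ₁(k+1) − l} (t^{k+1} − 1) · G^{k+1}_{(λ₂,…,λ_l)} in ℤ[t, t^{−1}]. -/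
/-!
Expanding the product, `G^k_λ` is a finite sum over exponent configurations: `c.1 i` for `wᵢ/z`
and `c.2 (i, j)` for `w_j/wᵢ` (`i < j`), constrained by the total exponent of every variable.

An admissible configuration for `a :: μ` is the same as an admissible configuration `x` for `μ`
together with the exponents `m_j ≤ x.1 j` of `w_j/w₁`, which are moved from the vertex `j` to the
edge `(1, j)`. As `a > 0`, the first vertex contributes `t^{(k+1)(a + Σ m) - 1} (t^{k+1} - 1)`, so
the sum over `m` factorizes over `j`, and each factor is the one-variable identity
`Σ_m t^{(k+1)m} c_k(x - m) d(m) = t^{-1} c_{k+1}(x)` between vertex weights `c` and edge weights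
`d`, which raises the level from `k` to `k + 1`.
-/

open Finset LaurentPolynomial

/-- `G^k_λ ∈ ℤ[t, t⁻¹]`: the coefficient of `z^{−|λ|} w₁^{λ₁} ⋯ w_l^{λ_l}` in the formal
product
`∏_{i=1}^{l} t^k (1 − wᵢ/z)(Σ_{j≥0} t^{(k+1)j} (wᵢ/z)^j)
  · ∏_{1≤i<j≤l} (1 − w_j/wᵢ)(Σ_{j≥0} t^{j} (w_j/wᵢ)^j)`.
It is computed by expanding the product: `jm.1 i` is the exponent of `wᵢ/z` chosen from the
`i`-th factor, whose coefficient is `t^k` for exponent `0` and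
`t^k (t^{(k+1)j} − t^{(k+1)(j−1)})` for exponent `j ≥ 1`; for a pair `p = (i,j)` with
`i < j`, `jm.2 p` is the exponent of `w_j/wᵢ`, with coefficient `1` for exponent `0` and
`t^j − t^{j−1}` for exponent `j ≥ 1`.  The conditions match the exponents of `z` and of each
`wᵢ`.  Only finitely many terms contribute, so the `finsum` is the honest coefficient. -/
noncomputable def Ghl (k : ℕ) (lam : List ℕ) : LaurentPolynomial ℤ :=
  ∑ᶠ jm : (Fin lam.length → ℕ) × (Fin lam.length × Fin lam.length → ℕ),
    if (∀ p : Fin lam.length × Fin lam.length, ¬ p.1 < p.2 → jm.2 p = 0) ∧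
        (∑ i, jm.1 i) = lam.sum ∧
        (∀ i : Fin lam.length,
          (jm.1 i : ℤ) + (∑ j, if j < i then (jm.2 (j, i) : ℤ) else 0)
            - (∑ j, if i < j then (jm.2 (i, j) : ℤ) else 0) = (lam.get i : ℤ))
      then (∏ i : Fin lam.length,
          (if jm.1 i = 0 then T (k : ℤ)
            else T ((k : ℤ) + ((k : ℤ) + 1) * (jm.1 i : ℤ))
              - T ((k : ℤ) + ((k : ℤ) + 1) * ((jm.1 i : ℤ) - 1)))) *
        ∏ p : Fin lam.length × Fin lam.length,
          (if p.1 < p.2 then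
            (if jm.2 p = 0 then 1 else T (jm.2 p : ℤ) - T ((jm.2 p : ℤ) - 1)) else 1)
      else 0

theorem LaurentPolynomial.T_sum {ι : Type*} (s : Finset ι) (g : ι → ℤ) :
    (T (∑ i ∈ s, g i) : LaurentPolynomial ℤ) = ∏ i ∈ s, T (g i) := by
  simpa using (AddMonoidAlgebra.prod_single (R := ℤ) s g fun _ => 1).symm

namespace Ghl

abbrev Config (l : ℕ) : Type := (Fin l → ℕ) × (Fin l × Fin l → ℕ)

variable {l : ℕ}

/-- The exponent of `wᵢ` in the monomial that `c` selects from the expanded product. -/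
def balance (c : Config l) (i : Fin l) : ℤ :=
  (c.1 i : ℤ) + (∑ j, if j < i then (c.2 (j, i) : ℤ) else 0)
    - ∑ j, if i < j then (c.2 (i, j) : ℤ) else 0

structure IsAdmissible (lam : List ℕ) (c : Config lam.length) : Prop where
  upper : ∀ p : Fin lam.length × Fin lam.length, ¬ p.1 < p.2 → c.2 p = 0
  sum_fst : ∑ i, c.1 i = lam.sum
  balance_eq : ∀ i, balance c i = lam.get i

noncomputable def vertexWeight (k a : ℕ) : LaurentPolynomial ℤ :=
  if a = 0 then T (k : ℤ)
    else T ((k : ℤ) + ((k : ℤ) + 1) * (a : ℤ)) - T ((k : ℤ) + ((k : ℤ) + 1) * ((a : ℤ) - 1))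

noncomputable def edgeWeight (m : ℕ) : LaurentPolynomial ℤ :=
  if m = 0 then 1 else T (m : ℤ) - T ((m : ℤ) - 1)

noncomputable def edgeProduct (e : Fin l × Fin l → ℕ) : LaurentPolynomial ℤ :=
  ∏ p : Fin l × Fin l, if p.1 < p.2 then edgeWeight (e p) else 1

noncomputable def weight (k : ℕ) (c : Config l) : LaurentPolynomial ℤ :=
  (∏ i, vertexWeight k (c.1 i)) * edgeProduct c.2

theorem vertexWeight_zero (k : ℕ) : vertexWeight k 0 = T (k : ℤ) := if_pos rfl

theorem vertexWeight_of_ne_zero (k : ℕ) {a : ℕ} (ha : a ≠ 0) :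
    vertexWeight k a = T (((k : ℤ) + 1) * a - 1) * (T ((k : ℤ) + 1) - 1) := by
  rw [vertexWeight, if_neg ha, mul_sub_one (T _), ← T_add]
  congr 2 <;> ring

theorem edgeWeight_zero : edgeWeight 0 = 1 := if_pos rfl

theorem edgeWeight_succ (m : ℕ) : edgeWeight (m + 1) = T ((m + 1 : ℕ) : ℤ) - T (m : ℤ) := by
  rw [edgeWeight, if_neg m.succ_ne_zero, Nat.cast_succ, add_sub_cancel_right]

theorem sum_range_edgeWeight (M : ℕ) : ∑ m ∈ range (M + 1), edgeWeight m = T (M : ℤ) := by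
  rw [sum_range_succ', edgeWeight_zero]
  simp only [edgeWeight_succ]
  rw [sum_range_sub (fun m : ℕ => (T (m : ℤ) : LaurentPolynomial ℤ)), Nat.cast_zero, T_zero,
    sub_add_cancel]

theorem sum_range_mul_vertexWeight_mul_edgeWeight (k a : ℕ) :
    ∑ m ∈ range (a + 1), T (((k : ℤ) + 1) * m) * (vertexWeight k (a - m) * edgeWeight m)
      = T (-1) * vertexWeight (k + 1) a := by
  rcases a with _ | b
  · rw [zero_add, sum_range_one, Nat.sub_zero, vertexWeight_zero, vertexWeight_zero,
      edgeWeight_zero, Nat.cast_zero, mul_zero, T_zero, one_mul, mul_one, ← T_add]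
    push_cast
    ring_nf
  · have hlow : ∀ m ∈ range (b + 1),
        T (((k : ℤ) + 1) * m) * (vertexWeight k (b + 1 - m) * edgeWeight m)
          = T (((k : ℤ) + 1) * (b + 1) - 1) * (T ((k : ℤ) + 1) - 1) * edgeWeight m := by
      intro m hm
      have hmb : m ≤ b := Nat.lt_succ_iff.mp (mem_range.mp hm)
      rw [vertexWeight_of_ne_zero k (by omega), Nat.cast_sub (by omega), ← mul_assoc, ← mul_assoc,
        ← T_add]
      push_cast
      ring_nf
    rw [sum_range_succ, sum_congr rfl hlow, ← mul_sum, sum_range_edgeWeight, Nat.sub_self,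
      vertexWeight_zero, edgeWeight_succ, vertexWeight_of_ne_zero (k + 1) b.succ_ne_zero]
    push_cast
    simp only [mul_sub, sub_mul, mul_one, ← T_add]
    ring_nf

section Admissible

variable {lam : List ℕ} {c : Config lam.length}

theorem sum_mul_balance (φ : Fin l → ℤ) (c : Config l) :
    ∑ i, φ i * balance c i
      = ∑ i, φ i * c.1 i + ∑ i, ∑ j, if j < i then (φ i - φ j) * c.2 (j, i) else 0 := by
  have hswap : ∑ i, ∑ j, φ i * (if i < j then (c.2 (i, j) : ℤ) else 0)
      = ∑ i, ∑ j, φ j * (if j < i then (c.2 (j, i) : ℤ) else 0) := sum_comm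
  calc ∑ i, φ i * balance c i
      = ∑ i, φ i * c.1 i + (∑ i, ∑ j, φ i * (if j < i then (c.2 (j, i) : ℤ) else 0))
          - ∑ i, ∑ j, φ i * (if i < j then (c.2 (i, j) : ℤ) else 0) := by
        simp only [balance, mul_sub, mul_add, sum_add_distrib, sum_sub_distrib, mul_sum]
    _ = _ := by
        rw [hswap, add_sub_assoc, ← sum_sub_distrib]
        congr! 2 with i _
        rw [← sum_sub_distrib]
        congr! 1 with j _
        split_ifs <;> ring

theorem IsAdmissible.fst_le (hc : IsAdmissible lam c) (i : Fin lam.length) : c.1 i ≤ lam.sum :=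
  hc.sum_fst ▸ single_le_sum (fun _ _ => Nat.zero_le _) (mem_univ i)

theorem IsAdmissible.snd_le (hc : IsAdmissible lam c) (p : Fin lam.length × Fin lam.length) :
    c.2 p ≤ lam.sum := by
  obtain ⟨i₀, j₀⟩ := p
  by_cases hlt : i₀ < j₀
  swap
  · rw [hc.upper (i₀, j₀) hlt]
    exact Nat.zero_le _
  -- sum the balance equations over the up-set of `j₀`; the edge `(i₀, j₀)` enters it
  let φ : Fin lam.length → ℤ := fun i => if j₀ ≤ i then 1 else 0
  have hφ : Monotone φ := fun i j hij => by
    dsimp only [φ]; split_ifs <;> omega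
  have hedge : (c.2 (i₀, j₀) : ℤ) ≤ ∑ i, ∑ j, if j < i then (φ i - φ j) * c.2 (j, i) else 0 := by
    have hnonneg : ∀ i j : Fin lam.length, 0 ≤ if j < i then (φ i - φ j) * c.2 (j, i) else 0 :=
      fun i j => by
        split_ifs with h
        · exact mul_nonneg (sub_nonneg.mpr (hφ h.le)) (Nat.cast_nonneg _)
        · exact le_rfl
    calc (c.2 (i₀, j₀) : ℤ) = if i₀ < j₀ then (φ j₀ - φ i₀) * c.2 (i₀, j₀) else 0 := by
          simp [φ, hlt, not_le.mpr hlt]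
      _ ≤ ∑ j, if j < j₀ then (φ j₀ - φ j) * c.2 (j, j₀) else 0 :=
          single_le_sum (fun j _ => hnonneg j₀ j) (mem_univ i₀)
      _ ≤ _ := single_le_sum (fun i _ => sum_nonneg fun j _ => hnonneg i j) (mem_univ j₀)
  have hfst : 0 ≤ ∑ i, φ i * c.1 i :=
    sum_nonneg fun i _ => mul_nonneg (by dsimp only [φ]; split_ifs <;> norm_num) (Nat.cast_nonneg _)
  have hbal : ∑ i, φ i * balance c i ≤ lam.sum := by
    simp only [hc.balance_eq]
    calc ∑ i, φ i * (lam.get i : ℤ) ≤ ∑ i, (lam.get i : ℤ) :=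
          sum_le_sum fun i _ => by dsimp only [φ]; split_ifs <;> simp
      _ = lam.sum := by exact_mod_cast Fin.sum_univ_getElem lam
  have := sum_mul_balance φ c
  omega

theorem finite_setOf_isAdmissible (lam : List ℕ) :
    {c : Config lam.length | IsAdmissible lam c}.Finite :=
  ((Set.Finite.pi' fun _ => Set.finite_Iic lam.sum).prod
    (Set.Finite.pi' fun _ => Set.finite_Iic lam.sum)).subset fun _ hc => ⟨hc.fst_le, hc.snd_le⟩

end Admissible

section Head

variable {n a : ℕ} {μ : List ℕ}

def dropHead (c : Config (n + 1)) : Config n :=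
  (fun j => c.1 j.succ + c.2 (0, j.succ), fun p => c.2 (p.1.succ, p.2.succ))

def headRow (c : Config (n + 1)) (j : Fin n) : ℕ := c.2 (0, j.succ)

def consHead (a : ℕ) (x : Config n) (m : Fin n → ℕ) : Config (n + 1) :=
  (Fin.cons (a + ∑ j, m j) fun j => x.1 j - m j,
    Function.uncurry (Fin.cons (Fin.cons 0 m) fun i => Fin.cons 0 fun j => x.2 (i, j)))

theorem balance_zero (c : Config (n + 1)) :
    balance c 0 = (c.1 0 : ℤ) - (∑ j, headRow c j : ℕ) := by
  simp [balance, Fin.sum_univ_succ, headRow]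

theorem balance_succ (c : Config (n + 1)) (i : Fin n) :
    balance c i.succ = balance (dropHead c) i := by
  simp only [balance, dropHead, Fin.sum_univ_succ, Fin.succ_pos, ↓reduceIte, Fin.succ_lt_succ_iff,
    not_lt_zero, zero_add, Nat.cast_add, sub_left_inj]
  ring

theorem headRow_consHead (x : Config n) (m : Fin n → ℕ) : headRow (consHead a x m) = m := rfl

theorem dropHead_consHead {x : Config n} {m : Fin n → ℕ} (hm : m ≤ x.1) :
    dropHead (consHead a x m) = x := by
  ext j
  · exact Nat.sub_add_cancel (hm j)
  · rfl

variable {c : Config (μ.length + 1)}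

theorem IsAdmissible.fst_zero (hc : IsAdmissible (a :: μ) c) : c.1 0 = a + ∑ j, headRow c j := by
  have h := hc.balance_eq 0
  rw [balance_zero] at h
  simp only [List.get_cons_zero] at h
  omega

theorem IsAdmissible.dropHead (hc : IsAdmissible (a :: μ) c) : IsAdmissible μ (dropHead c) where
  upper p hp := hc.upper (p.1.succ, p.2.succ) (by simpa using hp)
  sum_fst := by
    have h : ∑ i : Fin (μ.length + 1), c.1 i = a + μ.sum := hc.sum_fst
    rw [Fin.sum_univ_succ, hc.fst_zero] at h
    simp only [Ghl.dropHead, sum_add_distrib, headRow] at h ⊢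
    omega
  balance_eq i := by simpa [balance_succ] using hc.balance_eq i.succ

theorem IsAdmissible.consHead {x : Config μ.length} {m : Fin μ.length → ℕ}
    (hx : IsAdmissible μ x) (hm : m ≤ x.1) : IsAdmissible (a :: μ) (consHead a x m) where
  upper := by
    rintro ⟨i, j⟩ hij
    cases i using Fin.cases <;> cases j using Fin.cases
    · rfl
    · exact absurd (Fin.succ_pos _) hij
    · rfl
    · exact hx.upper _ (by simpa using hij)
  sum_fst := by
    change ∑ i : Fin (μ.length + 1), _ = a + μ.sum
    rw [Fin.sum_univ_succ, ← hx.sum_fst]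
    simp only [Ghl.consHead, Fin.cons_zero, Fin.cons_succ]
    rw [add_assoc, ← sum_add_distrib]
    congr 2 with j
    exact Nat.add_sub_cancel' (hm j)
  balance_eq i := by
    refine Fin.cases ?_ (fun i => ?_) i
    · rw [balance_zero, headRow_consHead]
      simp [Ghl.consHead]
    · rw [balance_succ, dropHead_consHead hm]
      simpa using hx.balance_eq i

theorem consHead_dropHead (hc : IsAdmissible (a :: μ) c) :
    consHead a (dropHead c) (headRow c) = c := by
  refine Prod.ext (funext fun i => ?_) (funext fun ⟨i, j⟩ => ?_)
  · refine Fin.cases ?_ (fun i => ?_) i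
    · exact hc.fst_zero.symm
    · exact Nat.add_sub_cancel _ _
  · cases i using Fin.cases <;> cases j using Fin.cases
    · exact (hc.upper (0, 0) (lt_irrefl _)).symm
    · rfl
    · exact (hc.upper _ (Fin.not_lt_zero _)).symm
    · rfl

theorem weight_consHead (k : ℕ) (x : Config n) (m : Fin n → ℕ) :
    weight k (consHead a x m)
      = vertexWeight k (a + ∑ j, m j) * (∏ j, vertexWeight k (x.1 j - m j) * edgeWeight (m j))
        * edgeProduct x.2 := by
  simp only [weight, edgeProduct, Ghl.consHead, Fin.prod_univ_succ, Fintype.prod_prod_type,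
    Fin.cons_zero, Fin.cons_succ, Function.uncurry_apply_pair, Fin.succ_pos, Fin.not_lt_zero,
    Fin.succ_lt_succ_iff, if_true, if_false, one_mul, prod_mul_distrib]
  ring

theorem sum_weight_consHead (k : ℕ) (ha : a ≠ 0) (x : Config n) :
    ∑ m ∈ Fintype.piFinset (fun j => range (x.1 j + 1)), weight k (consHead a x m)
      = T ((a : ℤ) * ((k : ℤ) + 1) - ((n : ℤ) + 1)) * (T ((k : ℤ) + 1) - 1) * weight (k + 1) x := by
  have hhead : ∀ m : Fin n → ℕ, vertexWeight k (a + ∑ j, m j)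
      = T ((a : ℤ) * ((k : ℤ) + 1) - 1) * (T ((k : ℤ) + 1) - 1) * ∏ j, T (((k : ℤ) + 1) * m j) := by
    intro m
    rw [vertexWeight_of_ne_zero k (by omega), ← T_sum, mul_right_comm, ← T_add]
    congr 2
    push_cast
    rw [mul_add, mul_sum]
    ring
  calc ∑ m ∈ Fintype.piFinset (fun j => range (x.1 j + 1)), weight k (consHead a x m)
      = T ((a : ℤ) * ((k : ℤ) + 1) - 1) * (T ((k : ℤ) + 1) - 1) * edgeProduct x.2
          * ∑ m ∈ Fintype.piFinset (fun j => range (x.1 j + 1)),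
              ∏ j, T (((k : ℤ) + 1) * m j) * (vertexWeight k (x.1 j - m j) * edgeWeight (m j)) := by
        rw [mul_sum]
        refine sum_congr rfl fun m _ => ?_
        rw [weight_consHead, hhead, prod_mul_distrib (f := fun j => T (((k : ℤ) + 1) * m j))]
        ring
    _ = T ((a : ℤ) * ((k : ℤ) + 1) - 1) * (T ((k : ℤ) + 1) - 1) * edgeProduct x.2
          * ∏ j, (T (-1) * vertexWeight (k + 1) (x.1 j)) := by
        rw [← prod_univ_sum (fun j => range (x.1 j + 1))
          (fun j i => T (((k : ℤ) + 1) * i) * (vertexWeight k (x.1 j - i) * edgeWeight i))]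
        simp only [sum_range_mul_vertexWeight_mul_edgeWeight]
    _ = _ := by
        have hT : (T ((a : ℤ) * ((k : ℤ) + 1) - ((n : ℤ) + 1)) : LaurentPolynomial ℤ)
            = T ((a : ℤ) * ((k : ℤ) + 1) - 1) * T (-1) ^ n := by
          rw [T_pow, ← T_add]
          ring_nf
        rw [prod_mul_distrib, prod_const, card_univ, Fintype.card_fin, weight, hT]
        ring

end Head

end Ghl

open Ghl

theorem Ghl_eq_sum_weight (k : ℕ) (lam : List ℕ) :
    Ghl k lam = ∑ c ∈ (finite_setOf_isAdmissible lam).toFinset, weight k c := by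
  classical
  rw [← finsum_mem_eq_finite_toFinset_sum, finsum_mem_def, Ghl]
  refine finsum_congr fun c => ?_
  rw [Set.indicator_apply]
  exact if_congr ⟨fun ⟨h₁, h₂, h₃⟩ => ⟨h₁, h₂, h₃⟩, fun h => ⟨h.1, h.2, h.3⟩⟩ rfl rfl

theorem Ghl_cons_eq_sum (k a : ℕ) (μ : List ℕ) :
    Ghl k (a :: μ) = ∑ x ∈ (finite_setOf_isAdmissible μ).toFinset,
      ∑ m ∈ Fintype.piFinset (fun j => range (x.1 j + 1)), weight k (consHead a x m) := by
  rw [Ghl_eq_sum_weight, sum_sigma']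
  refine sum_bij' (fun c _ => ⟨dropHead c, headRow c⟩) (fun y _ => consHead a y.1 y.2)
    ?_ ?_ ?_ ?_ ?_
  · intro c hc
    rw [Set.Finite.mem_toFinset] at hc
    simp only [mem_sigma, Set.Finite.mem_toFinset, Fintype.mem_piFinset, mem_range]
    exact ⟨hc.dropHead, fun j => Nat.lt_succ_of_le (Nat.le_add_left _ _)⟩
  · rintro ⟨x, m⟩ hy
    simp only [mem_sigma, Set.Finite.mem_toFinset, Fintype.mem_piFinset, mem_range] at hy
    simp only [Set.Finite.mem_toFinset]
    exact hy.1.consHead fun j => Nat.lt_succ_iff.mp (hy.2 j)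
  · intro c hc
    exact consHead_dropHead ((Set.Finite.mem_toFinset _).mp hc)
  · rintro ⟨x, m⟩ hy
    simp only [mem_sigma, Fintype.mem_piFinset, mem_range] at hy
    exact Sigma.ext (dropHead_consHead fun j => Nat.lt_succ_iff.mp (hy.2 j))
      (heq_of_eq (headRow_consHead (a := a) x m))
  · intro c hc
    rw [consHead_dropHead ((Set.Finite.mem_toFinset _).mp hc)]

theorem Ghl_recursion_general (k : ℕ) (lam : List ℕ) (h0 : lam ≠ [])
    (h2 : ∀ x ∈ lam, 0 < x) :
    Ghl k lam =
      T ((lam.headI : ℤ) * ((k : ℤ) + 1) - (lam.length : ℤ)) * (T ((k : ℤ) + 1) - 1) *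
        Ghl (k + 1) lam.tail := by
  obtain ⟨a, μ, rfl⟩ := List.exists_cons_of_ne_nil h0
  have ha : a ≠ 0 := (h2 a List.mem_cons_self).ne'
  rw [Ghl_cons_eq_sum, List.tail_cons, Ghl_eq_sum_weight, mul_sum]
  refine sum_congr rfl fun x _ => ?_
  rw [sum_weight_consHead k ha, List.headI_cons, List.length_cons, Nat.cast_succ]

/-- The recursion `G^{k}_{(λ₁,…,λ_l)} = t^{λ₁(k+1) − l} (t^{k+1} − 1) G^{k+1}_{(λ₂,…,λ_l)}`
in `ℤ[t, t⁻¹]`, for every partition `λ` of length `l ≥ 1` and every integer `k ≥ 0`. -/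
theorem Ghl_recursion (k : ℕ) (lam : List ℕ) (h0 : lam ≠ [])
    (h1 : lam.Pairwise (· ≥ ·)) (h2 : ∀ x ∈ lam, 0 < x) :
    Ghl k lam =
      T ((lam.headI : ℤ) * ((k : ℤ) + 1) - (lam.length : ℤ)) * (T ((k : ℤ) + 1) - 1) *
        Ghl (k + 1) lam.tail :=
  Ghl_recursion_general k lam h0 h2
end

section
/- For every partition λ = (λ₁, …, λ_l) of length l, 𝔉_λ(u) = ∏_{i=1}^{l} (u t^{i−1} x)^{λᵢ} in ℤ[t, u, x]. -/
/-!
Matching the degree of each `wᵢ` forces the exponent of `(ux/wᵢ)` to be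
`λᵢ + (row sum) − (column sum)` of the strictly upper triangular matrix `m` of exponents of the
ratios `w_j/wᵢ`, so `𝔉_λ = (ux)^{|λ|} Σ_m ∏ c(m_{ji})`, summed over the `m` for which all these
exponents are nonnegative, with `c(0) = 1` and `c(k) = t^k − t^{k−1}`. Once the rest of `m` is
fixed, the entries of its first row range independently over intervals `0 … Bᵢ` with
`Σ Bᵢ = λ₂ + ⋯ + λ_l`; since `Σ_{k ≤ B} c(k) = t^B` telescopes, removing the first row multiplies
the sum by `t^{λ₂ + ⋯ + λ_l}`, and induction on `l` gives `t^{Σ (i−1) λᵢ}`.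
-/

open Finset

/-- `𝔉_λ(u) ∈ ℤ[t, u, x]` (with `t = X 0`, `u = X 1`, `x = X 2`): the coefficient of
`w₁^{−λ₁} ⋯ w_l^{−λ_l}` in the formal product
`∏_{i=1}^{l} (Σ_{k≥0} (ux)^k wᵢ^{−k}) · ∏_{1≤j<i≤l} (1 − w_j/wᵢ)(Σ_{k≥0} t^k (w_j/wᵢ)^k)`.
It is computed by expanding the product: `km.1 i` is the exponent chosen from the `i`-th
factor `Σ_k (ux)^k wᵢ^{−k}` (contributing `(ux)^{k}` and `wᵢ^{−k}`), and for a pair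
`p = (j,i)` with `j < i`, `km.2 p` is the exponent of the ratio `w_j/wᵢ`, whose coefficient
in `(1 − w_j/wᵢ)(Σ_k t^k (w_j/wᵢ)^k)` is `1` for exponent `0` and `t^k − t^{k−1}` for
exponent `k ≥ 1`.  The condition matches the exponent of each `wᵢ` with `−λᵢ`.  Only
finitely many terms contribute, so the `finsum` is the honest coefficient. -/
noncomputable def Fvx (lam : List ℕ) : MvPolynomial (Fin 3) ℤ :=
  ∑ᶠ km : (Fin lam.length → ℕ) × (Fin lam.length × Fin lam.length → ℕ),
    if (∀ p : Fin lam.length × Fin lam.length, ¬ p.1 < p.2 → km.2 p = 0) ∧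
        (∀ a : Fin lam.length,
          -(km.1 a : ℤ) + (∑ b, if a < b then (km.2 (a, b) : ℤ) else 0)
            - (∑ c, if c < a then (km.2 (c, a) : ℤ) else 0) = -(lam.get a : ℤ))
      then (∏ i : Fin lam.length, (MvPolynomial.X 1 * MvPolynomial.X 2) ^ (km.1 i)) *
        ∏ p : Fin lam.length × Fin lam.length,
          (if p.1 < p.2 then
            (if km.2 p = 0 then 1
              else (MvPolynomial.X 0) ^ (km.2 p) - (MvPolynomial.X 0) ^ (km.2 p - 1))
            else 1)
      else 0

namespace Fvx

variable {R : Type*} [CommRing R] {l : ℕ}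

def ratioCoeff (t : R) (k : ℕ) : R := if k = 0 then 1 else t ^ k - t ^ (k - 1)

theorem sum_range_ratioCoeff (t : R) (B : ℕ) : ∑ k ∈ range (B + 1), ratioCoeff t k = t ^ B := by
  induction B with
  | zero => simp [ratioCoeff]
  | succ B ih =>
    rw [sum_range_succ, ih, ratioCoeff, if_neg B.succ_ne_zero, Nat.add_sub_cancel]
    ring

def rowSum (m : Fin l × Fin l → ℕ) (a : Fin l) : ℕ := ∑ b, if a < b then m (a, b) else 0

def colSum (m : Fin l × Fin l → ℕ) (a : Fin l) : ℕ := ∑ c, if c < a then m (c, a) else 0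

def IsStrictUpper (m : Fin l × Fin l → ℕ) : Prop := ∀ p : Fin l × Fin l, ¬ p.1 < p.2 → m p = 0

def Admissible (lam : Fin l → ℕ) (m : Fin l × Fin l → ℕ) : Prop :=
  IsStrictUpper m ∧ ∀ a, colSum m a ≤ lam a + rowSum m a

instance (lam : Fin l → ℕ) : DecidablePred (Admissible lam) := fun _ => by
  unfold Admissible IsStrictUpper; infer_instance

def upperProd (t : R) (m : Fin l × Fin l → ℕ) : R :=
  ∏ p, if p.1 < p.2 then ratioCoeff t (m p) else 1

theorem sum_rowSum (m : Fin l × Fin l → ℕ) : ∑ a, rowSum m a = ∑ a, colSum m a :=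
  sum_comm

theorem IsStrictUpper.rowSum_eq {m : Fin l × Fin l → ℕ} (hm : IsStrictUpper m) (a : Fin l) :
    rowSum m a = ∑ b, m (a, b) :=
  sum_congr rfl fun b _ => by split_ifs with h; exacts [rfl, (hm _ h).symm]

theorem IsStrictUpper.colSum_eq {m : Fin l × Fin l → ℕ} (hm : IsStrictUpper m) (a : Fin l) :
    colSum m a = ∑ c, m (c, a) :=
  sum_congr rfl fun c _ => by split_ifs with h; exacts [rfl, (hm _ h).symm]

theorem Admissible.sum_le {lam : Fin l → ℕ} {m : Fin l × Fin l → ℕ} (hm : Admissible lam m) :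
    ∑ p, m p ≤ ∑ a : Fin l, (a : ℕ) * lam a := by
  have hrow : ∑ p : Fin l × Fin l, (p.1 : ℕ) * m p = ∑ a : Fin l, (a : ℕ) * rowSum m a := by
    simp only [hm.1.rowSum_eq, mul_sum, Fintype.sum_prod_type]
  have hcol : ∑ p : Fin l × Fin l, (p.2 : ℕ) * m p = ∑ a : Fin l, (a : ℕ) * colSum m a := by
    simp only [hm.1.colSum_eq, mul_sum, Fintype.sum_prod_type]
    exact sum_comm
  have hgap :
      ∑ p : Fin l × Fin l, ((p.1 : ℕ) * m p + m p) ≤ ∑ p : Fin l × Fin l, (p.2 : ℕ) * m p :=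
    sum_le_sum fun p _ => by
      by_cases h : p.1 < p.2
      · rw [← Nat.succ_mul]; exact Nat.mul_le_mul_right _ h
      · simp [hm.1 p h]
  have hcol_le : ∑ a : Fin l, (a : ℕ) * colSum m a ≤
      ∑ a : Fin l, ((a : ℕ) * lam a + (a : ℕ) * rowSum m a) :=
    sum_le_sum fun a _ => by rw [← mul_add]; exact Nat.mul_le_mul_left _ (hm.2 a)
  rw [sum_add_distrib] at hgap hcol_le
  omega

theorem Admissible.sum_sub_colSum {lam : Fin l → ℕ} {m : Fin l × Fin l → ℕ}
    (hm : Admissible lam m) : ∑ a, (lam a + rowSum m a - colSum m a) = ∑ a, lam a := by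
  have := sum_congr rfl fun a (_ : a ∈ univ) => Nat.sub_add_cancel (hm.2 a)
  rw [sum_add_distrib, sum_add_distrib, sum_rowSum] at this
  omega

theorem finite_setOf_admissible (lam : Fin l → ℕ) : {m | Admissible lam m}.Finite :=
  (Set.Finite.pi fun _ => Set.finite_Iic (∑ a : Fin l, (a : ℕ) * lam a)).subset fun m hm p _ =>
    (single_le_sum (fun q _ => Nat.zero_le (m q)) (mem_univ p)).trans hm.sum_le

theorem hasFiniteSupport_ite_admissible {M : Type*} [AddCommMonoid M] (lam : Fin l → ℕ)
    (f : (Fin l × Fin l → ℕ) → M) :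
    Function.HasFiniteSupport fun m => if Admissible lam m then f m else 0 :=
  (finite_setOf_admissible lam).subset fun m hm => by
    by_contra h; exact hm (if_neg h)

def extendUpper (m : Fin l × Fin l → ℕ) (r : Fin l → ℕ) : Fin (l + 1) × Fin (l + 1) → ℕ :=
  fun p => Fin.cases 0 (fun i => Fin.cases (r i) (fun j => m (j, i)) p.1) p.2

section extendUpper

variable (m : Fin l × Fin l → ℕ) (r : Fin l → ℕ)

@[simp] theorem extendUpper_apply_zero_right (j : Fin (l + 1)) :
    extendUpper m r (j, 0) = 0 := rfl

@[simp] theorem extendUpper_apply_zero_succ (i : Fin l) : extendUpper m r (0, i.succ) = r i := rfl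

@[simp] theorem extendUpper_apply_succ_succ (j i : Fin l) :
    extendUpper m r (j.succ, i.succ) = m (j, i) := rfl

theorem extendUpper_injective : Function.Injective (Function.uncurry (extendUpper (l := l))) := by
  rintro ⟨m, r⟩ ⟨m', r'⟩ h
  have h := congrFun h
  exact Prod.ext (funext fun q => by simpa using h (q.1.succ, q.2.succ))
    (funext fun i => by simpa using h (0, i.succ))

theorem IsStrictUpper.eq_extendUpper {M : Fin (l + 1) × Fin (l + 1) → ℕ} (hM : IsStrictUpper M) :
    M = extendUpper (fun q => M (q.1.succ, q.2.succ)) (fun i => M (0, i.succ)) := by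
  funext ⟨j, i⟩
  cases i using Fin.cases with
  | zero => exact hM _ (Fin.not_lt_zero j)
  | succ i => cases j using Fin.cases <;> rfl

theorem isStrictUpper_extendUpper : IsStrictUpper (extendUpper m r) ↔ IsStrictUpper m := by
  refine ⟨fun h q hq => by simpa using h (q.1.succ, q.2.succ) (by simpa using hq), ?_⟩
  rintro h ⟨j, i⟩ hji
  cases i using Fin.cases with
  | zero => rfl
  | succ i =>
    cases j using Fin.cases with
    | zero => exact absurd (Fin.succ_pos i) hji
    | succ j => exact h (j, i) (by simpa using hji)

theorem colSum_extendUpper_zero : colSum (extendUpper m r) 0 = 0 :=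
  sum_eq_zero fun c _ => if_neg (Fin.not_lt_zero c)

theorem colSum_extendUpper_succ (a : Fin l) :
    colSum (extendUpper m r) a.succ = r a + colSum m a := by
  simp [colSum, Fin.sum_univ_succ]

theorem rowSum_extendUpper_succ (a : Fin l) :
    rowSum (extendUpper m r) a.succ = rowSum m a := by
  simp [rowSum, Fin.sum_univ_succ]

theorem admissible_extendUpper (lam : Fin (l + 1) → ℕ) :
    Admissible lam (extendUpper m r) ↔
      IsStrictUpper m ∧ ∀ a, r a + colSum m a ≤ Fin.tail lam a + rowSum m a := by
  simp only [Admissible, isStrictUpper_extendUpper, Fin.forall_fin_succ, colSum_extendUpper_zero,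
    colSum_extendUpper_succ, rowSum_extendUpper_succ, zero_le, true_and, Fin.tail]

theorem upperProd_extendUpper (t : R) :
    upperProd t (extendUpper m r) = (∏ i, ratioCoeff t (r i)) * upperProd t m := by
  simp [upperProd, Fintype.prod_prod_type, Fin.prod_univ_succ, Fin.succ_pos]

end extendUpper

theorem finsum_ite_forall_le {ι M : Type*} [Fintype ι] [DecidableEq ι] [AddCommMonoid M]
    (B : ι → ℕ) [DecidablePred fun r : ι → ℕ => ∀ i, r i ≤ B i] (g : (ι → ℕ) → M) :
    ∑ᶠ r : ι → ℕ, (if ∀ i, r i ≤ B i then g r else 0) =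
      ∑ r ∈ Fintype.piFinset fun i => range (B i + 1), g r := by
  have hmem (r : ι → ℕ) : r ∈ Fintype.piFinset (fun i => range (B i + 1)) ↔ ∀ i, r i ≤ B i := by
    simp
  rw [finsum_eq_sum_of_support_subset _ fun r hr => (hmem r).2 ?_]
  · exact sum_congr rfl fun r hr => if_pos ((hmem r).1 hr)
  · by_contra h; exact hr (if_neg h)

theorem finsum_admissible_extendUpper (t : R) (lam : Fin (l + 1) → ℕ) (m : Fin l × Fin l → ℕ) :
    ∑ᶠ r, (if Admissible lam (extendUpper m r) then upperProd t (extendUpper m r) else 0) =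
      if Admissible (Fin.tail lam) m then t ^ (∑ i, Fin.tail lam i) * upperProd t m else 0 := by
  classical
  simp only [admissible_extendUpper, upperProd_extendUpper]
  split_ifs with hm
  · have hcond (r : Fin l → ℕ) :
        (IsStrictUpper m ∧ ∀ a, r a + colSum m a ≤ Fin.tail lam a + rowSum m a) ↔
          ∀ a, r a ≤ Fin.tail lam a + rowSum m a - colSum m a :=
      ⟨fun h a => by have := h.2 a; omega,
        fun h => ⟨hm.1, fun a => by have := h a; have := hm.2 a; omega⟩⟩
    simp only [hcond]
    rw [finsum_ite_forall_le, ← sum_mul, ← prod_univ_sum]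
    rw [prod_congr rfl fun a _ => sum_range_ratioCoeff t _, prod_pow_eq_pow_sum, hm.sum_sub_colSum]
  · refine finsum_eq_zero_of_forall_eq_zero fun r => if_neg fun h => hm ⟨h.1, fun a => ?_⟩
    have := h.2 a
    omega

theorem finsum_admissible_upperProd (t : R) :
    ∀ {l : ℕ} (lam : Fin l → ℕ),
      ∑ᶠ m, (if Admissible lam m then upperProd t m else 0) = t ^ ∑ a : Fin l, (a : ℕ) * lam a
  | 0, lam => by
    rw [finsum_unique, if_pos ⟨fun p => p.1.elim0, fun a => a.elim0⟩]
    simp [upperProd]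
  | l + 1, lam => by
    set G : (Fin (l + 1) × Fin (l + 1) → ℕ) → R :=
      fun M => if Admissible lam M then upperProd t M else 0
    have hsupp : Function.support G ⊆ Set.range (Function.uncurry extendUpper) := fun M hM => by
      by_contra h
      exact hM (if_neg fun hA => h ⟨(_, _), hA.1.eq_extendUpper.symm⟩)
    have hfin : Function.HasFiniteSupport
        fun x : (Fin l × Fin l → ℕ) × (Fin l → ℕ) => G (Function.uncurry extendUpper x) :=
      (hasFiniteSupport_ite_admissible lam _).preimage extendUpper_injective.injOn
    calc ∑ᶠ M, G M
      _ = ∑ᶠ x, G (Function.uncurry extendUpper x) := by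
        rw [← finsum_mem_range extendUpper_injective, ← finsum_mem_univ]
        exact finsum_mem_inter_support_eq' _ _ _ fun M hM => by simpa using hsupp hM
      _ = ∑ᶠ m, t ^ (∑ i, Fin.tail lam i) *
            (if Admissible (Fin.tail lam) m then upperProd t m else 0) := by
        rw [finsum_curry _ hfin]
        simp only [G, Function.uncurry_apply_pair, finsum_admissible_extendUpper, mul_ite, mul_zero]
      _ = t ^ ∑ a : Fin (l + 1), (a : ℕ) * lam a := by
        rw [← mul_finsum' _ _ (hasFiniteSupport_ite_admissible _ _), finsum_admissible_upperProd,
          ← pow_add, Fin.sum_univ_succ]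
        simp [Fin.tail, add_mul, sum_add_distrib, add_comm]

theorem cast_rowSum (m : Fin l × Fin l → ℕ) (a : Fin l) :
    (rowSum m a : ℤ) = ∑ b, if a < b then (m (a, b) : ℤ) else 0 := by
  push_cast [rowSum]; rfl

theorem cast_colSum (m : Fin l × Fin l → ℕ) (a : Fin l) :
    (colSum m a : ℤ) = ∑ c, if c < a then (m (c, a) : ℤ) else 0 := by
  push_cast [colSum]; rfl

end Fvx

open Fvx MvPolynomial

theorem Fvx_eq_mul_finsum (lam : List ℕ) :
    Fvx lam = (X 1 * X 2) ^ (∑ a, lam.get a) *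
      ∑ᶠ m, if Admissible lam.get m then upperProd (X 0 : MvPolynomial (Fin 3) ℤ) m else 0 := by
  -- the exponents `k` of the `(ux)^k wᵢ^{-k}` factors are forced by the `wᵢ`-degrees
  set φ : (Fin lam.length × Fin lam.length → ℕ) → (Fin lam.length → ℕ) × _ :=
    fun m => (fun a => lam.get a + rowSum m a - colSum m a, m)
  have hφ : Function.Injective φ := fun m m' h => congrArg Prod.snd h
  have hcond (km : (Fin lam.length → ℕ) × (Fin lam.length × Fin lam.length → ℕ)) :
      ((∀ p : Fin lam.length × Fin lam.length, ¬ p.1 < p.2 → km.2 p = 0) ∧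
          ∀ a, -(km.1 a : ℤ) + rowSum km.2 a - colSum km.2 a = -(lam.get a)) ↔
        Admissible lam.get km.2 ∧ km = φ km.2 := by
    refine ⟨fun h => ⟨⟨h.1, fun a => ?_⟩, Prod.ext (funext fun a => ?_) rfl⟩,
      fun h => ⟨h.1.1, fun a => ?_⟩⟩
    · have := h.2 a; omega
    · have := h.2 a; simp only [φ]; omega
    · have := h.1.2 a; rw [h.2]; simp only [φ]; omega
  unfold Fvx
  simp only [← cast_rowSum, ← cast_colSum]
  rw [← finsum_mem_univ, finsum_mem_inter_support_eq' _ _ (Set.range φ), finsum_mem_range hφ,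
    mul_finsum]
  · refine finsum_congr fun m => ?_
    rw [mul_ite, mul_zero]
    by_cases hA : Admissible lam.get m
    · rw [if_pos hA, if_pos ((hcond (φ m)).2 ⟨hA, rfl⟩), prod_pow_eq_pow_sum, hA.sum_sub_colSum]
      rfl
    · rw [if_neg hA, if_neg fun h => hA ((hcond (φ m)).1 h).1]
  · intro km hkm
    refine iff_of_true trivial ?_
    by_contra h
    exact hkm (if_neg fun hc => h ⟨km.2, ((hcond km).1 hc).2.symm⟩)

theorem Fvx_eq_general (lam : List ℕ) :
    Fvx lam =
      ∏ i : Fin lam.length,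
        (MvPolynomial.X 1 * (MvPolynomial.X 0) ^ (i : ℕ) * MvPolynomial.X 2) ^ (lam.get i) := by
  rw [Fvx_eq_mul_finsum, finsum_admissible_upperProd]
  simp only [mul_pow, ← pow_mul, prod_mul_distrib, prod_pow_eq_pow_sum]
  ring

/-- For every partition `λ = (λ₁, …, λ_l)` of length `l`,
`𝔉_λ(u) = ∏_{i=1}^{l} (u t^{i−1} x)^{λᵢ}` in `ℤ[t, u, x]`. -/
theorem Fvx_eq (lam : List ℕ) (h1 : lam.Pairwise (· ≥ ·)) (h2 : ∀ x ∈ lam, 0 < x) :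
    Fvx lam =
      ∏ i : Fin lam.length,
        (MvPolynomial.X 1 * (MvPolynomial.X 0) ^ (i : ℕ) * MvPolynomial.X 2) ^ (lam.get i) :=
  Fvx_eq_general lam
end

section
/- For every partition λ = (λ₁, …, λ_l) of length l ≥ 1, 𝔉_{(λ₁,…,λ_l)}(u) = (ux)^{λ₁} · 𝔉_{(λ₂,…,λ_l)}(tu) in ℤ[t, u, x], where 𝔉_{(λ₂,…,λ_l)}(tu) denotes the result of substituting tu for u in 𝔉_{(λ₂,…,λ_l)}(u). -/
/-!
Expanding the product, `𝔉_λ` is a sum over exponent choices subject to one balance equation per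
variable. Split off `w₁`: let `m₀` record the powers of `w₁ / wᵢ` and `k` the powers of `ux / wᵢ`
for `i ≥ 2`. The balance at `w₁` forces the power of `ux / w₁` to be `λ₁ + ∑ m₀`, and the other
balance equations are those of `(λ₂, …, λ_l)` for the exponents `k + m₀`. For fixed `k + m₀ = k'`
the coefficients `t^j - t^{j-1}` of `(1 - z) / (1 - t z)` telescope:
`∑_{m₀ ≤ k'} ∏ᵢ (coefficient of z^{m₀ i}) = t^{∑ k'}`, which is exactly the effect of `u ↦ t u`
on `(ux)^{∑ k'}`.
-/

open Finset

open MvPolynomial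

theorem List.get_cons_eq_finCons {α : Type*} (a : α) (l : List α) :
    (a :: l).get = Fin.cons a l.get := by
  funext i
  cases i using Fin.cases <;> rfl

section Sigma

variable {α : Type*} {σ : α → Type*} {M : Type*} [AddCommMonoid M]

theorem Set.Finite.sigma_finset_eq_coe {s : Set α} (hs : s.Finite) (t : ∀ a, Finset (σ a)) :
    s.sigma (fun a => (t a : Set (σ a))) = ↑(hs.toFinset.sigma t) := by
  rw [Finset.coe_sigma, hs.coe_toFinset]

theorem finsum_mem_sigma_finset {s : Set α} (hs : s.Finite) (t : ∀ a, Finset (σ a))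
    (f : (Σ a, σ a) → M) :
    ∑ᶠ x ∈ s.sigma (fun a => (t a : Set (σ a))), f x = ∑ᶠ a ∈ s, ∑ b ∈ t a, f ⟨a, b⟩ := by
  rw [hs.sigma_finset_eq_coe, finsum_mem_coe_finset, Finset.sum_sigma,
    finsum_mem_eq_finite_toFinset_sum _ hs]

end Sigma

section CrossCoeff

variable {R : Type*} [CommRing R]

/-- The coefficient of `z ^ k` in `(1 - z) / (1 - t z)`. -/
def crossCoeff (t : R) (k : ℕ) : R :=
  if k = 0 then 1 else t ^ k - t ^ (k - 1)

@[simp]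
theorem crossCoeff_zero (t : R) : crossCoeff t 0 = 1 := if_pos rfl

theorem map_crossCoeff {S F : Type*} [CommRing S] [FunLike F R S] [RingHomClass F R S] (f : F)
    (t : R) (k : ℕ) :
    f (crossCoeff t k) = crossCoeff (f t) k := by
  unfold crossCoeff
  split_ifs <;> simp

theorem sum_Iic_crossCoeff (t : R) (K : ℕ) : ∑ j ∈ Finset.Iic K, crossCoeff t j = t ^ K := by
  rw [← Nat.range_succ_eq_Iic]
  induction K with
  | zero => simp
  | succ K ih => rw [Finset.sum_range_succ, ih, crossCoeff, if_neg K.succ_ne_zero]; simp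

theorem sum_Iic_prod_crossCoeff {ι : Type*} [Fintype ι] [DecidableEq ι] (t : R) (k : ι → ℕ) :
    ∑ m ∈ Finset.Iic k, ∏ i, crossCoeff t (m i) = t ^ ∑ i, k i := by
  rw [← Finset.prod_pow_eq_pow_sum, show Finset.Iic k = Fintype.piFinset fun i => Finset.Iic (k i)
    from rfl, ← Finset.prod_univ_sum]
  exact Finset.prod_congr rfl fun i _ => sum_Iic_crossCoeff t (k i)

end CrossCoeff

namespace Fvx

/-- `km.1 i` is the power of `(ux) / wᵢ` and `km.2 (j, i)` the power of `w_j / wᵢ` chosen from the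
factors of the product defining `Fvx`. -/
abbrev Config (n : ℕ) := (Fin n → ℕ) × (Fin n × Fin n → ℕ)

variable {n l : ℕ}

/-- The exponent choices contributing to the coefficient of `∏ wᵢ ^ (-μ i)`. -/
def admissible (μ : Fin n → ℕ) : Set (Config n) :=
  {km | (∀ p : Fin n × Fin n, ¬ p.1 < p.2 → km.2 p = 0) ∧
    ∀ a, km.1 a + ∑ c, km.2 (c, a) = μ a + ∑ b, km.2 (a, b)}

noncomputable def weight (km : Config n) : MvPolynomial (Fin 3) ℤ :=
  (X 1 * X 2) ^ (∑ i, km.1 i) * ∏ p, crossCoeff (X 0) (km.2 p)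

theorem mem_admissible_iff (μ : Fin n → ℕ) (km : Config n) :
    km ∈ admissible μ ↔ (∀ p : Fin n × Fin n, ¬ p.1 < p.2 → km.2 p = 0) ∧
      ∀ a, -(km.1 a : ℤ) + (∑ b, if a < b then (km.2 (a, b) : ℤ) else 0)
        - (∑ c, if c < a then (km.2 (c, a) : ℤ) else 0) = -(μ a : ℤ) := by
  refine and_congr_right fun htri => forall_congr' fun a => ?_
  have hrow : ∀ b, (if a < b then (km.2 (a, b) : ℤ) else 0) = km.2 (a, b) := fun b => by
    split_ifs with h
    · rfl
    · simp [htri (a, b) h]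
  have hcol : ∀ c, (if c < a then (km.2 (c, a) : ℤ) else 0) = km.2 (c, a) := fun c => by
    split_ifs with h
    · rfl
    · simp [htri (c, a) h]
  simp only [hrow, hcol, ← Nat.cast_sum]
  omega

theorem _root_.Fvx_eq_finsum_admissible (lam : List ℕ) :
    Fvx lam = ∑ᶠ km ∈ admissible lam.get, weight km := by
  classical
  rw [Fvx, finsum_mem_def]
  refine finsum_congr fun km => ?_
  rw [Set.indicator_apply, if_congr (mem_admissible_iff _ km).symm rfl rfl]
  refine if_ctx_congr Iff.rfl (fun ⟨htri, _⟩ => ?_) fun _ => rfl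
  rw [weight, Finset.prod_pow_eq_pow_sum]
  congr 1
  refine Finset.prod_congr rfl fun p _ => ?_
  by_cases h : p.1 < p.2
  · rw [if_pos h]
    rfl
  · rw [if_neg h, htri p h, crossCoeff_zero]

/-- Integrating out `w₁`: the powers of `w₁ / wᵢ` are absorbed into the outer factors of the
remaining variables, and recorded separately. -/
def split (km : Config (l + 1)) : Σ _ : Config l, Fin l → ℕ :=
  ⟨(fun b => km.1 b.succ + km.2 (0, b.succ), fun p => km.2 (p.1.succ, p.2.succ)),
    fun b => km.2 (0, b.succ)⟩

def glue (hd : ℕ) (x : Σ _ : Config l, Fin l → ℕ) : Config (l + 1) :=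
  (Fin.cons (hd + ∑ b, x.2 b) (x.1.1 - x.2), fun p =>
    (Fin.cons (Fin.cons 0 x.2) (fun i => Fin.cons 0 fun j => x.1.2 (i, j)) :
      Fin (l + 1) → Fin (l + 1) → ℕ) p.1 p.2)

@[simp] theorem glue_fst_zero (hd : ℕ) (x : Σ _ : Config l, Fin l → ℕ) :
    (glue hd x).1 0 = hd + ∑ b, x.2 b := rfl

@[simp] theorem glue_fst_succ (hd : ℕ) (x : Σ _ : Config l, Fin l → ℕ) (b : Fin l) :
    (glue hd x).1 b.succ = x.1.1 b - x.2 b := rfl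

@[simp] theorem glue_snd_zero_zero (hd : ℕ) (x : Σ _ : Config l, Fin l → ℕ) :
    (glue hd x).2 (0, 0) = 0 := rfl

@[simp] theorem glue_snd_zero_succ (hd : ℕ) (x : Σ _ : Config l, Fin l → ℕ) (b : Fin l) :
    (glue hd x).2 (0, b.succ) = x.2 b := rfl

@[simp] theorem glue_snd_succ_zero (hd : ℕ) (x : Σ _ : Config l, Fin l → ℕ) (i : Fin l) :
    (glue hd x).2 (i.succ, 0) = 0 := rfl

@[simp] theorem glue_snd_succ_succ (hd : ℕ) (x : Σ _ : Config l, Fin l → ℕ) (i j : Fin l) :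
    (glue hd x).2 (i.succ, j.succ) = x.1.2 (i, j) := rfl

section Glue

variable (hd : ℕ) (μ : Fin l → ℕ)

theorem glue_mem_admissible {x : Σ _ : Config l, Fin l → ℕ} (hx : x.1 ∈ admissible μ)
    (hle : x.2 ≤ x.1.1) : glue hd x ∈ admissible (Fin.cons hd μ) := by
  obtain ⟨htri, hbal⟩ := hx
  refine ⟨fun ⟨i, j⟩ hij => ?_, fun a => ?_⟩
  · cases i using Fin.cases <;> cases j using Fin.cases
    · rfl
    · exact absurd (Fin.succ_pos _) hij
    · rfl
    · exact htri _ fun h => hij (Fin.succ_lt_succ_iff.mpr h)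
  · cases a using Fin.cases with
    | zero => simp [Fin.sum_univ_succ]
    | succ b =>
      have := hbal b
      have : x.2 b ≤ x.1.1 b := hle b
      simp only [Fin.sum_univ_succ, glue_fst_succ, glue_snd_zero_succ, glue_snd_succ_succ,
        glue_snd_succ_zero, Fin.cons_succ]
      omega

theorem split_mem_admissible {km : Config (l + 1)} (hkm : km ∈ admissible (Fin.cons hd μ)) :
    (split km).1 ∈ admissible μ ∧ (split km).2 ≤ (split km).1.1 := by
  obtain ⟨htri, hbal⟩ := hkm
  refine ⟨⟨fun ⟨i, j⟩ hij => htri _ fun h => hij (Fin.succ_lt_succ_iff.mp h), fun b => ?_⟩,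
    fun b => Nat.le_add_left _ _⟩
  have hb := hbal b.succ
  simp only [Fin.sum_univ_succ, Fin.cons_succ, htri (b.succ, 0) (Fin.not_lt_zero _)] at hb
  simp only [split]
  omega

theorem split_glue {x : Σ _ : Config l, Fin l → ℕ} (hle : x.2 ≤ x.1.1) :
    split (glue hd x) = x := by
  obtain ⟨⟨k, m⟩, m₀⟩ := x
  simp only [split, glue_fst_succ, glue_snd_zero_succ, glue_snd_succ_succ]
  congr
  funext b
  exact Nat.sub_add_cancel (hle b)

theorem glue_split {km : Config (l + 1)} (hkm : km ∈ admissible (Fin.cons hd μ)) :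
    glue hd (split km) = km := by
  obtain ⟨htri, hbal⟩ := hkm
  have h0 := hbal 0
  simp only [Fin.sum_univ_succ, htri (0, 0) (lt_irrefl 0), Fin.cons_zero,
    fun c => htri (c, 0) (Fin.not_lt_zero c), Finset.sum_const_zero] at h0
  refine Prod.ext (funext fun a => ?_) (funext fun ⟨i, j⟩ => ?_)
  · cases a using Fin.cases
    · simp only [glue_fst_zero, split]
      omega
    · exact Nat.add_sub_cancel _ _
  · cases i using Fin.cases <;> cases j using Fin.cases
    · exact (htri (0, 0) (lt_irrefl 0)).symm
    · rfl
    · exact (htri _ (Fin.not_lt_zero _)).symm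
    · rfl

theorem bijOn_glue :
    Set.BijOn (glue hd) ((admissible μ).sigma fun km => ↑(Finset.Iic km.1))
      (admissible (Fin.cons hd μ)) := by
  have mem_sigma (x : Σ _ : Config l, Fin l → ℕ) :
      x ∈ (admissible μ).sigma (fun km => ↑(Finset.Iic km.1)) ↔
        x.1 ∈ admissible μ ∧ x.2 ≤ x.1.1 := by
    rw [Set.mem_sigma_iff, Finset.mem_coe, Finset.mem_Iic]
  refine Set.InvOn.bijOn (f' := split) ⟨fun x hx => split_glue hd ((mem_sigma x).1 hx).2,
    fun km hkm => glue_split hd μ hkm⟩ (fun x hx => ?_) fun km hkm => ?_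
  · exact glue_mem_admissible hd μ ((mem_sigma x).1 hx).1 ((mem_sigma x).1 hx).2
  · exact (mem_sigma _).2 (split_mem_admissible hd μ hkm)

theorem weight_glue {km : Config l} {m₀ : Fin l → ℕ} (hle : m₀ ≤ km.1) :
    weight (glue hd ⟨km, m₀⟩) = (X 1 * X 2) ^ (hd + ∑ i, km.1 i) *
      ((∏ b, crossCoeff (X 0) (m₀ b)) * ∏ p, crossCoeff (X 0) (km.2 p)) := by
  have hsum : ∑ i, (glue hd ⟨km, m₀⟩).1 i = hd + ∑ i, km.1 i := by
    rw [Fin.sum_univ_succ, glue_fst_zero]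
    simp only [glue_fst_succ]
    rw [add_assoc, ← Finset.sum_add_distrib]
    exact congrArg _ (Finset.sum_congr rfl fun b _ => Nat.add_sub_of_le (hle b))
  have hprod : ∏ p, crossCoeff (X 0 : MvPolynomial (Fin 3) ℤ) ((glue hd ⟨km, m₀⟩).2 p) =
      (∏ b, crossCoeff (X 0) (m₀ b)) * ∏ p, crossCoeff (X 0) (km.2 p) := by
    simp only [Fintype.prod_prod_type, Fin.prod_univ_succ (n := l), glue_snd_zero_zero,
      glue_snd_zero_succ, glue_snd_succ_zero, glue_snd_succ_succ, crossCoeff_zero, one_mul]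
  rw [weight, hsum, hprod]

/-- The substitution `u ↦ t u`. -/
noncomputable def scaleU : Fin 3 → MvPolynomial (Fin 3) ℤ :=
  fun i => if i = 1 then X 0 * X 1 else X i

theorem bind₁_weight (km : Config l) :
    bind₁ scaleU (weight km) =
      (X 0 * (X 1 * X 2)) ^ (∑ i, km.1 i) * ∏ p, crossCoeff (X 0) (km.2 p) := by
  have h0 : scaleU 0 = X 0 := rfl
  have h1 : scaleU 1 = X 0 * X 1 := rfl
  have h2 : scaleU 2 = X 2 := rfl
  simp only [weight, map_mul, map_pow, map_prod, map_crossCoeff, bind₁_X_right, h0, h1, h2]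
  ring

theorem mul_bind₁_weight (km : Config l) :
    (X 1 * X 2) ^ hd * bind₁ scaleU (weight km) =
      ∑ m₀ ∈ Finset.Iic km.1, weight (glue hd ⟨km, m₀⟩) := by
  rw [Finset.sum_congr rfl fun m₀ hm₀ => weight_glue hd (Finset.mem_Iic.1 hm₀),
    ← Finset.mul_sum, ← Finset.sum_mul, sum_Iic_prod_crossCoeff, bind₁_weight]
  ring

end Glue

theorem finite_admissible (μ : Fin n → ℕ) : (admissible μ).Finite := by
  induction n with
  | zero => exact Set.toFinite _
  | succ l ih =>
    rw [← Fin.cons_self_tail μ, ← (bijOn_glue _ _).image_eq,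
      (ih (Fin.tail μ)).sigma_finset_eq_coe]
    exact Set.Finite.image _ (Finset.finite_toSet _)

theorem finsum_admissible_cons (hd : ℕ) (μ : Fin l → ℕ) :
    ∑ᶠ km ∈ admissible (Fin.cons hd μ), weight km =
      (X 1 * X 2) ^ hd * bind₁ scaleU (∑ᶠ km ∈ admissible μ, weight km) := by
  calc _ = ∑ᶠ x ∈ (admissible μ).sigma (fun km => ↑(Finset.Iic km.1)), weight (glue hd x) :=
        (finsum_mem_eq_of_bijOn _ (bijOn_glue hd μ) fun _ _ => rfl).symm
    _ = ∑ᶠ km ∈ admissible μ, ∑ m₀ ∈ Finset.Iic km.1, weight (glue hd ⟨km, m₀⟩) :=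
        finsum_mem_sigma_finset (finite_admissible μ) _ _
    _ = ∑ᶠ km ∈ admissible μ, (X 1 * X 2) ^ hd * bind₁ scaleU (weight km) :=
        finsum_mem_congr rfl fun km _ => (mul_bind₁_weight hd km).symm
    _ = _ := by
      rw [← mul_finsum_mem' _ _ (finite_admissible μ)]
      exact congrArg _ ((bind₁ scaleU).toAddMonoidHom.map_finsum_mem _ (finite_admissible μ)).symm

end Fvx

theorem Fvx_recursion_general (lam : List ℕ) (h0 : lam ≠ []) :
    Fvx lam =
      (MvPolynomial.X 1 * MvPolynomial.X 2) ^ lam.headI *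
        MvPolynomial.bind₁
          (fun i : Fin 3 =>
            if i = 1 then MvPolynomial.X 0 * MvPolynomial.X 1 else MvPolynomial.X i)
          (Fvx lam.tail) := by
  obtain ⟨hd, tl, rfl⟩ := List.exists_cons_of_ne_nil h0
  rw [Fvx_eq_finsum_admissible, Fvx_eq_finsum_admissible, List.get_cons_eq_finCons]
  exact Fvx.finsum_admissible_cons hd tl.get

/-- The recursion `𝔉_{(λ₁,…,λ_l)}(u) = (ux)^{λ₁} · 𝔉_{(λ₂,…,λ_l)}(tu)` in `ℤ[t, u, x]`,
for every partition `λ` of length `l ≥ 1`; the substitution `u ↦ tu` is performed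
by `MvPolynomial.bind₁`. -/
theorem Fvx_recursion (lam : List ℕ) (h0 : lam ≠ [])
    (h1 : lam.Pairwise (· ≥ ·)) (h2 : ∀ x ∈ lam, 0 < x) :
    Fvx lam =
      (MvPolynomial.X 1 * MvPolynomial.X 2) ^ lam.headI *
        MvPolynomial.bind₁
          (fun i : Fin 3 =>
            if i = 1 then MvPolynomial.X 0 * MvPolynomial.X 1 else MvPolynomial.X i)
          (Fvx lam.tail) :=
  Fvx_recursion_general lam h0
end
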